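/- arXiv:2104.00942 — 10 statements merged into one kernel-verified Lean document; each statement's English description precedes it below -/
import Mathlib

section
/- Let C be a braided monoidal category, S an invertible object, and M an object of C. Let m_S ∈ End_C(M) be the unique endomorphism such that the monodromy satisfies 𝓜_{S,M} = id_S ⊗ m_S (it exists and is unique because f ↦ id_S ⊗ f : End(M) → End(S ⊗ M) is bijective for invertible S). Then: (i) m_S is an isomorphism; (ii) for every n ≥ 1, writing S^{⊗n} = S ⊗ (S ⊗ (⋯ ⊗ S)) for the n-fold right-nested tensor power, the monodromy of S^{⊗n} with M is 𝓜_{S^{⊗n},M} = id_{S^{⊗n}} ⊗ (m_S)^n; (iii) for the dual S* one has 𝓜_{S*,M} = id_{S*} ⊗ (m_S)^{-1}. -/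
open CategoryTheory MonoidalCategory

/-- The `n`-fold right-nested tensor power `S ⊗ (S ⊗ (⋯ ⊗ S))` of an object `S`
(with `S^{⊗0} = 𝟙` by convention). -/
def tensorPow {C : Type*} [Category C] [MonoidalCategory C] (S : C) : ℕ → C
  | 0 => 𝟙_ C
  | 1 => S
  | (n + 2) => S ⊗ tensorPow S (n + 1)

/-- The `n`-fold composition power `f ≫ f ≫ ⋯ ≫ f` of an endomorphism `f`. -/
def compPow {C : Type*} [Category C] {M : C} (f : M ⟶ M) : ℕ → (M ⟶ M)
  | 0 => 𝟙 M
  | (n + 1) => f ≫ compPow f n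

/-!
Since `ε : Sd ⊗ S ≅ 𝟙` is the counit of the adjunction `Sd ⊗ - ⊣ S ⊗ -`, whiskering by `S` is
fully faithful; hence `mS` is invertible, `S ◁ mS` being a monodromy. By the hexagon axioms the
monodromy is multiplicative: if `𝓜_{X,M} = X ◁ f` and `𝓜_{Y,M} = Y ◁ g` then
`𝓜_{X ⊗ Y,M} = (X ⊗ Y) ◁ (g ≫ f)`, which gives the tensor powers by induction. Finally
`S ⊗ Sd ≅ 𝟙` via `η` has trivial monodromy, and expanding it shows `S ◁ (𝓜_{Sd,M} ≫ Sd ◁ mS) = 𝟙`,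
from which `S ◁ -` can be cancelled.
-/

lemma compPow_succ' {C : Type*} [Category C] {M : C} (f : M ⟶ M) (n : ℕ) :
    compPow f (n + 1) = compPow f n ≫ f := by
  induction n with
  | zero => simp [compPow]
  | succ n ih =>
    simp only [compPow] at ih ⊢
    rw [Category.assoc, ih]

namespace CategoryTheory

open BraidedCategory

variable {C : Type*} [Category C] [MonoidalCategory C]

section ExactPairing

variable (S Sd : C) [ExactPairing S Sd] [IsIso (ε_ S Sd)]

instance isIso_tensorLeftAdjunction_counit : IsIso (tensorLeftAdjunction S Sd).counit := by
  have (Z : C) : IsIso ((tensorLeftAdjunction S Sd).counit.app Z) := by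
    simp only [tensorLeftAdjunction, Adjunction.mkOfHomEquiv_counit_app]
    dsimp [tensorLeftHomEquiv]
    infer_instance
  exact NatIso.isIso_of_isIso_app _

noncomputable def fullyFaithfulTensorLeftOfIsIsoEvaluation : (tensorLeft S).FullyFaithful :=
  (tensorLeftAdjunction S Sd).fullyFaithfulROfIsIsoCounit

end ExactPairing

variable [BraidedCategory C]

def monodromy (X Y : C) : X ⊗ Y ⟶ X ⊗ Y := (β_ X Y).hom ≫ (β_ Y X).hom

instance (X Y : C) : IsIso (monodromy X Y) := by
  unfold monodromy; infer_instance

lemma monodromy_naturality_left {X X' : C} (g : X ⟶ X') (M : C) :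
    g ▷ M ≫ monodromy X' M = monodromy X M ≫ g ▷ M := by
  simp [monodromy, braiding_naturality_left_assoc, braiding_naturality_right]

lemma monodromy_tensorUnit_left (M : C) : monodromy (𝟙_ C) M = 𝟙 _ := by
  simp [monodromy, braiding_tensorUnit_left, braiding_tensorUnit_right]

lemma monodromy_eq_id_of_iso_tensorUnit {X : C} (e : 𝟙_ C ≅ X) (M : C) :
    monodromy X M = 𝟙 _ := by
  rw [← cancel_epi (e.hom ▷ M), monodromy_naturality_left, monodromy_tensorUnit_left,
    Category.id_comp, Category.comp_id]

lemma monodromy_tensor_left (X Y M : C) :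
    monodromy (X ⊗ Y) M = (α_ X Y M).hom ≫ X ◁ (β_ Y M).hom ≫ (α_ X M Y).inv ≫
      monodromy X M ▷ Y ≫ (α_ X M Y).hom ≫ X ◁ (β_ M Y).hom ≫ (α_ X Y M).inv := by
  simp [monodromy, braiding_tensor_left_hom, braiding_tensor_right_hom]

lemma monodromy_tensor_left_of_eq_whiskerLeft {X M : C} {f : M ⟶ M}
    (hX : monodromy X M = X ◁ f) (Y : C) :
    monodromy (X ⊗ Y) M = (α_ X Y M).hom ≫ X ◁ (monodromy Y M ≫ Y ◁ f) ≫ (α_ X Y M).inv := by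
  rw [monodromy_tensor_left, hX]
  simp only [monodromy, MonoidalCategory.whiskerLeft_comp, Category.assoc]
  congr 1
  rw [← whisker_assoc_symm_assoc]
  simp only [← MonoidalCategory.whiskerLeft_comp_assoc, braiding_naturality_left]

lemma monodromy_tensor_eq_whiskerLeft {X Y M : C} {f g : M ⟶ M}
    (hX : monodromy X M = X ◁ f) (hY : monodromy Y M = Y ◁ g) :
    monodromy (X ⊗ Y) M = (X ⊗ Y) ◁ (g ≫ f) := by
  rw [monodromy_tensor_left_of_eq_whiskerLeft hX, hY, ← MonoidalCategory.whiskerLeft_comp,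
    tensor_whiskerLeft_symm]
  simp

lemma monodromy_tensorPow_eq_whiskerLeft {S M : C} {f : M ⟶ M} (h : monodromy S M = S ◁ f) :
    ∀ n : ℕ, monodromy (tensorPow S (n + 1)) M = tensorPow S (n + 1) ◁ compPow f (n + 1)
  | 0 => by simpa [tensorPow, compPow] using h
  | n + 1 => by
    rw [compPow_succ']
    exact monodromy_tensor_eq_whiskerLeft h (monodromy_tensorPow_eq_whiskerLeft h n)

section FullyFaithful

variable {S M : C} {f : M ⟶ M}

lemma isIso_of_monodromy_eq_whiskerLeft (hS : (tensorLeft S).FullyFaithful)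
    (h : monodromy S M = S ◁ f) : IsIso f := by
  have : IsIso ((tensorLeft S).map f) := by
    change IsIso (S ◁ f)
    rw [← h]
    infer_instance
  exact hS.isIso_of_isIso_map f

lemma monodromy_dual_eq_whiskerLeft_inv [(tensorLeft S).Faithful] (Sd : C) [ExactPairing S Sd]
    [IsIso (η_ S Sd)] (h : monodromy S M = S ◁ f) [IsIso f] : monodromy Sd M = Sd ◁ inv f := by
  have hS : S ◁ (monodromy Sd M ≫ Sd ◁ f) = S ◁ 𝟙 _ := by
    have := monodromy_tensor_left_of_eq_whiskerLeft h Sd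
    rw [monodromy_eq_id_of_iso_tensorUnit (asIso (η_ S Sd))] at this
    rw [← cancel_epi (α_ S Sd M).hom, ← cancel_mono (α_ S Sd M).inv]
    simpa using this.symm
  have hSd : monodromy Sd M ≫ Sd ◁ f = 𝟙 _ := (tensorLeft S).map_injective hS
  rwa [← IsIso.eq_comp_inv, Category.id_comp, inv_whiskerLeft] at hSd

end FullyFaithful

end CategoryTheory

/-- **Monodromy of powers of an invertible object.**
Let `C` be a braided monoidal category, `S` an invertible object (with two-sided dual
`Sd`, evaluation and coevaluation isomorphisms), `M` an object, and let `m_S` be the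
(unique) endomorphism of `M` with monodromy `𝓜_{S,M} = id_S ⊗ m_S`.  Then
(i) `m_S` is an isomorphism; (ii) `𝓜_{S^{⊗n},M} = id_{S^{⊗n}} ⊗ m_S^n` for all `n ≥ 1`;
(iii) `𝓜_{S*,M} = id_{S*} ⊗ m_S^{-1}`. -/
theorem stmt_2 {C : Type*} [Category C] [MonoidalCategory C] [BraidedCategory C]
    (S Sd : C) [ExactPairing S Sd]
    (hev : IsIso (ε_ S Sd)) (hcoev : IsIso (η_ S Sd))
    (M : C) (mS : M ⟶ M)
    (hmS : (β_ S M).hom ≫ (β_ M S).hom = S ◁ mS) :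
    IsIso mS ∧
    (∀ n : ℕ, 1 ≤ n →
      (β_ (tensorPow S n) M).hom ≫ (β_ M (tensorPow S n)).hom =
        tensorPow S n ◁ compPow mS n) ∧
    (∃ mSinv : M ⟶ M, mS ≫ mSinv = 𝟙 M ∧ mSinv ≫ mS = 𝟙 M ∧
      (β_ Sd M).hom ≫ (β_ M Sd).hom = Sd ◁ mSinv) := by
  let hS := fullyFaithfulTensorLeftOfIsIsoEvaluation S Sd
  have : (tensorLeft S).Faithful := hS.faithful
  have hmS_iso : IsIso mS := isIso_of_monodromy_eq_whiskerLeft hS hmS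
  refine ⟨hmS_iso, fun n hn => ?_, inv mS, IsIso.hom_inv_id mS, IsIso.inv_hom_id mS,
    monodromy_dual_eq_whiskerLeft_inv Sd hmS⟩
  obtain ⟨n, rfl⟩ := Nat.exists_eq_add_of_le' hn
  exact monodromy_tensorPow_eq_whiskerLeft hmS n
end

section
/- Let C be a ℂ-linear braided monoidal category, S an invertible object, and M, N objects of C. For an object X let m_{S,X} ∈ End_C(X) be the unique endomorphism with 𝓜_{S,X} = id_S ⊗ m_{S,X}. Then m_{S,M⊗N} = m_{S,M} ⊗ m_{S,N} as endomorphisms of M ⊗ N. Consequently, if α, β ∈ ℂ and p, q ≥ 0 are such that (m_{S,M} − α·id_M)^{p+1} = 0 and (m_{S,N} − β·id_N)^{q+1} = 0, then (m_{S,M⊗N} − αβ·id_{M⊗N})^{p+q+1} = 0. -/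
/-!
Since `S` has a dual `Sd` with `Sd ⊗ S ≅ 𝟙`, whiskering by `S` is injective on morphisms, so
`m_{S,X}` is determined by the monodromy `𝓜_{S,X}`. The hexagon axioms express `𝓜_{S,M⊗N}`
through `β_{S,M}`, `𝓜_{S,N}` and `β_{M,S}`; substituting `𝓜_{S,N} = S ◁ m_{S,N}` and sliding it
past `β_{M,S}` leaves `S ◁ (m_{S,M} ⊗ m_{S,N})`, hence `m_{S,M⊗N} = m_{S,M} ⊗ m_{S,N}`.

In the `ℂ`-algebra `End (M ⊗ N)` this is the product of the commuting elements
`x = m_{S,M} ▷ N` and `y = M ◁ m_{S,N}`, and `x - α`, `y - β` are nilpotent of orders `p + 1`,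
`q + 1`. Then `xy - αβ = (x - α) y + α (y - β)` is a sum of two commuting nilpotents of orders
`p + 1` and `q + 1`, so its `(p + q + 1)`-st power vanishes.
-/

open CategoryTheory MonoidalCategory

theorem Commute.mul_sub_smul_one_pow_eq_zero {R A : Type*} [CommRing R] [Ring A] [Algebra R A]
    {x y : A} (hxy : Commute x y) {a b : R} {p q : ℕ}
    (hx : (x - a • 1) ^ (p + 1) = 0) (hy : (y - b • 1) ^ (q + 1) = 0) :
    (x * y - (a * b) • 1) ^ (p + q + 1) = 0 := by
  have hxa : Commute (x - a • 1) y := hxy.sub_left ((Commute.one_left y).smul_left a)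
  have hyb : Commute y (y - b • 1) :=
    (Commute.refl y).sub_right ((Commute.one_right y).smul_right b)
  have hsplit : x * y - (a * b) • 1 = (x - a • 1) * y + a • (y - b • 1) := by
    simp only [sub_mul, smul_sub, smul_mul_assoc, one_mul, smul_smul]
    abel
  have hcomm : Commute ((x - a • 1) * y) (a • (y - b • 1)) :=
    ((hxa.sub_right ((Commute.one_right _).smul_right b)).mul_left hyb).smul_right a
  have hfirst : ((x - a • 1) * y) ^ (p + 1) = 0 := by rw [hxa.mul_pow, hx, zero_mul]
  have hsecond : (a • (y - b • 1)) ^ (q + 1) = 0 := by rw [smul_pow, hy, smul_zero]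
  rw [hsplit]
  exact hcomm.add_pow_eq_zero_of_add_le_succ_of_pow_eq_zero hfirst hsecond (by omega)

theorem compPow_eq_pow {C : Type*} [Category C] {X : C} (f : End X) (n : ℕ) :
    compPow f n = f ^ n := by
  induction n with
  | zero => rfl
  | succ n ih => rw [pow_succ, ← ih]; rfl

namespace CategoryTheory

theorem Functor.map_compPow {C D : Type*} [Category C] [Category D] (F : C ⥤ D) {X : C}
    (f : X ⟶ X) (n : ℕ) : compPow (F.map f) n = F.map (compPow f n) := by
  induction n with
  | zero => exact (F.map_id X).symm
  | succ n ih => rw [compPow, compPow, ih, F.map_comp]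

theorem Functor.compPow_map_sub_smul_id_eq_zero {R C D : Type*} [Semiring R]
    [Category C] [Category D] [Preadditive C] [Preadditive D]
    [CategoryTheory.Linear R C] [CategoryTheory.Linear R D] (F : C ⥤ D) [F.Additive] [F.Linear R]
    {X : C} (f : X ⟶ X) (a : R) {n : ℕ}
    (h : compPow (f - a • 𝟙 X) n = 0) : compPow (F.map f - a • 𝟙 (F.obj X)) n = 0 := by
  rw [← F.map_id, ← F.map_smul, ← F.map_sub, F.map_compPow, h, F.map_zero]

namespace MonoidalCategory

variable {C : Type*} [Category C] [MonoidalCategory C]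

theorem whiskerLeft_injective_of_iso_unit {S T : C} (e : T ⊗ S ≅ 𝟙_ C) {X Y : C} :
    Function.Injective (fun f : X ⟶ Y => S ◁ f) := by
  intro f g h
  have hTS : (T ⊗ S) ◁ f = (T ⊗ S) ◁ g := by simp only [tensor_whiskerLeft, h]
  have hunit : 𝟙_ C ◁ f = 𝟙_ C ◁ g := by
    rw [← cancel_mono (e.inv ▷ Y), whisker_exchange, whisker_exchange, hTS]
  simpa using hunit

theorem monodromy_tensor_eq_whiskerLeft_tensorHom [BraidedCategory C] {S M N : C}
    {f : M ⟶ M} {g : N ⟶ N}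
    (hf : (β_ S M).hom ≫ (β_ M S).hom = S ◁ f) (hg : (β_ S N).hom ≫ (β_ N S).hom = S ◁ g) :
    (β_ S (M ⊗ N)).hom ≫ (β_ (M ⊗ N) S).hom = S ◁ (f ⊗ₘ g) :=
  calc (β_ S (M ⊗ N)).hom ≫ (β_ (M ⊗ N) S).hom
      = (α_ S M N).inv ≫ (β_ S M).hom ▷ N ≫ (α_ M S N).hom ≫ M ◁ S ◁ g ≫
          (α_ M S N).inv ≫ (β_ M S).hom ▷ N ≫ (α_ S M N).hom := by
        rw [BraidedCategory.braiding_tensor_right_hom, BraidedCategory.braiding_tensor_left_hom,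
          ← hg]
        simp
    _ = (α_ S M N).inv ≫ ((β_ S M).hom ≫ (β_ M S).hom) ▷ N ≫ (S ⊗ M) ◁ g ≫ (α_ S M N).hom := by
        rw [associator_inv_naturality_right_assoc, Iso.hom_inv_id_assoc,
          whisker_exchange_assoc (β_ M S).hom g, comp_whiskerRight_assoc]
    _ = S ◁ (f ⊗ₘ g) := by simp [hf, MonoidalCategory.tensorHom_def]

end MonoidalCategory

end CategoryTheory

theorem stmt_3_general {C : Type*} [Category C] [Preadditive C] [CategoryTheory.Linear ℂ C]
    [MonoidalCategory C] [BraidedCategory C] [MonoidalPreadditive C] [MonoidalLinear ℂ C]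
    (S Sd : C) [ExactPairing S Sd]
    (hev : IsIso (ε_ S Sd))
    (M N : C) (mSM : M ⟶ M) (mSN : N ⟶ N) (mSMN : M ⊗ N ⟶ M ⊗ N)
    (hM : (β_ S M).hom ≫ (β_ M S).hom = S ◁ mSM)
    (hN : (β_ S N).hom ≫ (β_ N S).hom = S ◁ mSN)
    (hMN : (β_ S (M ⊗ N)).hom ≫ (β_ (M ⊗ N) S).hom = S ◁ mSMN) :
    mSMN = mSM ⊗ₘ mSN ∧
    ∀ (a b : ℂ) (p q : ℕ),
      compPow (mSM - a • 𝟙 M) (p + 1) = 0 →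
      compPow (mSN - b • 𝟙 N) (q + 1) = 0 →
      compPow (mSMN - (a * b) • 𝟙 (M ⊗ N)) (p + q + 1) = 0 := by
  have hmul : mSMN = mSM ⊗ₘ mSN :=
    whiskerLeft_injective_of_iso_unit (@asIso _ _ _ _ (ε_ S Sd) hev) <|
      hMN.symm.trans (monodromy_tensor_eq_whiskerLeft_tensorHom hM hN)
  refine ⟨hmul, fun a b p q hp hq => ?_⟩
  have hx := (tensorRight N).compPow_map_sub_smul_id_eq_zero mSM a hp
  have hy := (tensorLeft M).compPow_map_sub_smul_id_eq_zero mSN b hq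
  rw [compPow_eq_pow] at hx hy ⊢
  rw [hmul, tensorHom_def']
  exact Commute.mul_sub_smul_one_pow_eq_zero (A := End (M ⊗ N)) (whisker_exchange mSM mSN) hx hy

/-- **Multiplicativity of monodromy operators of a simple current.**
Let `C` be a `ℂ`-linear braided monoidal category, `S` an invertible object (two-sided
dual `Sd` with evaluation/coevaluation isomorphisms), and `M, N` objects.  If `m_{S,X}`
denotes the unique endomorphism of `X` with `𝓜_{S,X} = id_S ⊗ m_{S,X}`, then
`m_{S,M⊗N} = m_{S,M} ⊗ m_{S,N}`; consequently, if `(m_{S,M} − α)^{p+1} = 0` and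
`(m_{S,N} − β)^{q+1} = 0` then `(m_{S,M⊗N} − αβ)^{p+q+1} = 0`. -/
theorem stmt_3 {C : Type*} [Category C] [Preadditive C] [CategoryTheory.Linear ℂ C]
    [MonoidalCategory C] [BraidedCategory C] [MonoidalPreadditive C] [MonoidalLinear ℂ C]
    (S Sd : C) [ExactPairing S Sd]
    (hev : IsIso (ε_ S Sd)) (hcoev : IsIso (η_ S Sd))
    (M N : C) (mSM : M ⟶ M) (mSN : N ⟶ N) (mSMN : M ⊗ N ⟶ M ⊗ N)
    (hM : (β_ S M).hom ≫ (β_ M S).hom = S ◁ mSM)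
    (hN : (β_ S N).hom ≫ (β_ N S).hom = S ◁ mSN)
    (hMN : (β_ S (M ⊗ N)).hom ≫ (β_ (M ⊗ N) S).hom = S ◁ mSMN) :
    mSMN = mSM ⊗ₘ mSN ∧
    ∀ (a b : ℂ) (p q : ℕ),
      compPow (mSM - a • 𝟙 M) (p + 1) = 0 →
      compPow (mSN - b • 𝟙 N) (q + 1) = 0 →
      compPow (mSMN - (a * b) • 𝟙 (M ⊗ N)) (p + q + 1) = 0 :=
  stmt_3_general S Sd hev M N mSM mSN mSMN hM hN hMN
end

section
/- Let C be a ℂ-linear abelian category and M an object of C whose endomorphism algebra End_C(M) is finite dimensional over ℂ, say of dimension d. Let e ∈ End_C(M) be any endomorphism, and for α ∈ ℂ let M_α denote the subobject ker((e − α·id_M)^d) of M. Then the set A = {α ∈ ℂ : M_α ≠ 0} is finite, and the canonical morphism ⨁_{α ∈ A} M_α → M (induced by the inclusions of the subobjects M_α) is an isomorphism. Moreover, if e is an isomorphism, then 0 ∉ A. -/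
open CategoryTheory Limits

/-- The generalized eigen-subobject `M_α = ker((e − α·id_M)^d)` of an endomorphism `e`
of `M`, where `d = dim_ℂ End(M)`. -/
noncomputable def genEigenKer {C : Type*} [Category C] [Abelian C]
    [CategoryTheory.Linear ℂ C] {M : C} (e : M ⟶ M) (d : ℕ) (α : ℂ) : C :=
  kernel (compPow (e - α • 𝟙 M) d)

/-!
`End M` is a finite-dimensional `ℂ`-algebra, so `e` has a minimal polynomial `μ` of degree at
most `d`. It splits, hence divides `∏ (X - α)^d` over its roots `α`, and these factors are pairwise
coprime. A Bézout relation among the cofactors gives polynomials `q_α` with `∑ q_α(e) = 1`, where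
`q_α(e)` lands in `M_α` (as `(X - α)^d q_α` is a multiple of `μ`) and vanishes on `M_β` for
`β ≠ α` (as `(X - β)^d ∣ q_α`); this exhibits `M` as the biproduct of the `M_α`.
The roots of `μ` are exactly the `α` with `M_α ≠ 0`: otherwise `(X - α)^d` is coprime to `μ`,
so `(e - α)^d` is invertible, while for a root `α` the morphism `e - α` cannot be mono, since it
would cancel from `μ(e) = (μ / (X - α))(e) ≫ (e - α)`, contradicting minimality of `μ`.
-/

open Polynomial Function

section CompPow

variable {C : Type*} [Category C] {M : C}

theorem compPow_eq_pow_s4 (f : M ⟶ M) (n : ℕ) : compPow f n = End.of f ^ n := by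
  induction n with
  | zero => rfl
  | succ n ih => rw [pow_succ, ← ih]; rfl

theorem mono_of_mono_compPow (f : M ⟶ M) {n : ℕ} (hn : n ≠ 0) [Mono (compPow f n)] : Mono f := by
  obtain ⟨n, rfl⟩ := Nat.exists_eq_succ_of_ne_zero hn
  have : Mono (f ≫ compPow f n) := ‹Mono (compPow f (n + 1))›
  exact mono_of_mono f (compPow f n)

end CompPow

-- Stated modulo `∏ f` rather than as `∑ q = 1` so that the empty family is covered too.
theorem exists_sum_sub_one_dvd_of_pairwise_isCoprime {R : Type*} [CommRing R] {J : Type*}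
    [Fintype J] {f : J → R} (hf : Pairwise (IsCoprime on f)) :
    ∃ q : J → R, (∏ i, f i) ∣ ∑ j, q j - 1 ∧ (∀ j, (∏ i, f i) ∣ f j * q j) ∧
      ∀ i j, i ≠ j → f i ∣ q j := by
  classical
  rcases isEmpty_or_nonempty J with hJ | hJ
  · exact ⟨fun _ => 0, by simp, isEmptyElim, isEmptyElim⟩
  obtain ⟨r, hr⟩ := exists_sum_eq_one_iff_pairwise_coprime'.2 hf
  refine ⟨fun j => r j * ∏ i ∈ {j}ᶜ, f i, by simp [hr], fun j => ⟨r j, ?_⟩, fun i j hij => ?_⟩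
  · rw [Fintype.prod_eq_mul_prod_compl j]; ring
  · exact dvd_mul_of_dvd_right (Finset.dvd_prod_of_mem f (by simpa using hij)) _

section Biproduct

variable {C : Type*} [Category C] [Preadditive C]

theorem isIso_biproduct_desc_of_total {J : Type*} [Fintype J] {F : J → C} [HasBiproduct F] {M : C}
    (ι : ∀ j, F j ⟶ M) [∀ j, Mono (ι j)] (π : ∀ j, M ⟶ F j)
    (total : ∑ j, π j ≫ ι j = 𝟙 M) (orth : ∀ i j, i ≠ j → ι i ≫ π j = 0) :
    IsIso (biproduct.desc ι) := by
  classical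
  have ι_π_self : ∀ j, ι j ≫ π j = 𝟙 (F j) := fun j => by
    rw [← cancel_mono (ι j), Category.assoc, Category.id_comp]
    calc ι j ≫ π j ≫ ι j = ι j ≫ ∑ i, π i ≫ ι i := by
          rw [Preadditive.comp_sum, Finset.sum_eq_single j
            (fun i _ hij => by rw [← Category.assoc, orth j i (Ne.symm hij), Limits.zero_comp])
            (by simp)]
      _ = ι j := by rw [total, Category.comp_id]
  let b : Bicone F :=
    { pt := M, π := π, ι := ι
      ι_π := fun i j => by
        split_ifs with h
        · subst h; exact ι_π_self i
        · exact orth i j h }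
  exact (biproduct.uniqueUpToIso F (isBilimitOfTotal b total)).isIso_inv

end Biproduct

section Linear

variable {R : Type*} [CommRing R] {C : Type*} [Category C] [Preadditive C] [Linear R C] {M : C}

theorem sub_smul_id_eq_aeval (e : M ⟶ M) (α : R) :
    e - α • 𝟙 M = aeval (End.of e) (X - Polynomial.C α) := by
  rw [map_sub, aeval_X, aeval_C, Algebra.algebraMap_eq_smul_one]
  rfl

theorem compPow_sub_smul_eq_aeval (e : M ⟶ M) (α : R) (n : ℕ) :
    compPow (e - α • 𝟙 M) n = aeval (End.of e) ((X - Polynomial.C α) ^ n) := by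
  rw [compPow_eq_pow_s4, map_pow, ← sub_smul_id_eq_aeval]

variable [HasKernels C]

theorem isZero_kernel_aeval_of_isCoprime (e : M ⟶ M) {p q : R[X]}
    (hp : aeval (End.of e) p = 0) (hqp : IsCoprime q p) :
    IsZero (kernel (aeval (End.of e) q : M ⟶ M)) := by
  obtain ⟨u, v, huv⟩ := hqp
  have hinv : aeval (End.of e) q ≫ aeval (End.of e) u = 𝟙 M := by
    have := congrArg (aeval (End.of e)) huv
    rwa [map_add, map_mul, map_mul, hp, mul_zero, add_zero, map_one] at this
  refine IsZero.of_mono_eq_zero (kernel.ι _) ?_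
  rw [← Category.comp_id (kernel.ι _), ← hinv, kernel.condition_assoc, Limits.zero_comp]

theorem isIso_biproduct_desc_kernel_ι_of_pairwise_isCoprime [HasFiniteBiproducts C]
    (e : M ⟶ M) {J : Type*} [Fintype J] {f : J → R[X]}
    (hf : Pairwise (IsCoprime on f)) (he : aeval (End.of e) (∏ j, f j) = 0)
    (g : J → (M ⟶ M)) (hg : ∀ j, g j = aeval (End.of e) (f j)) :
    IsIso (biproduct.desc fun j => kernel.ι (g j)) := by
  obtain ⟨q, hsum, hker, hdvd⟩ := exists_sum_sub_one_dvd_of_pairwise_isCoprime hf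
  have vanish : ∀ {p}, (∏ j, f j) ∣ p → aeval (End.of e) p = 0 := by
    rintro p ⟨c, rfl⟩
    rw [map_mul, he, zero_mul]
  let P j : M ⟶ M := aeval (End.of e) (q j)
  have hPg : ∀ j, P j ≫ g j = 0 := fun j => by
    rw [hg]
    exact (map_mul _ _ _).symm.trans (vanish (hker j))
  refine isIso_biproduct_desc_of_total _ (fun j => kernel.lift (g j) (P j) (hPg j)) ?_ ?_
  · simp only [kernel.lift_ι]
    have := vanish hsum
    rwa [map_sub, map_sum, map_one, sub_eq_zero] at this
  · intro i j hij
    obtain ⟨c, hc⟩ := hdvd i j hij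
    have hPj : P j = g i ≫ aeval (End.of e) c := by
      rw [hg, show P j = aeval (End.of e) (q j) from rfl, hc, mul_comm, map_mul]
      rfl
    rw [← cancel_mono (kernel.ι (g j)), Category.assoc, kernel.lift_ι, Limits.zero_comp, hPj,
      kernel.condition_assoc, Limits.zero_comp]

end Linear

theorem Polynomial.Monic.dvd_prod_X_sub_C_pow_of_splits {K : Type*} [Field K] [DecidableEq K]
    {p : K[X]} (hp : p.Monic) (hsplit : p.Splits) {n : ℕ} (hn : p.natDegree ≤ n) :
    p ∣ ∏ a ∈ p.roots.toFinset, (X - C a) ^ n := by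
  conv_lhs => rw [hsplit.eq_prod_roots_of_monic hp]
  rw [Finset.prod_multiset_map_count]
  exact Finset.prod_dvd_prod_of_dvd _ _ fun a _ =>
    pow_dvd_pow _ ((p.roots.count_le_card a).trans (p.card_roots'.trans hn))

theorem minpoly.aeval_prod_X_sub_C_pow_roots {K A : Type*} [Field K] [DecidableEq K] [Ring A]
    [Algebra K A] {x : A} (hx : IsIntegral K x) (hsplit : (minpoly K x).Splits) {n : ℕ}
    (hn : (minpoly K x).natDegree ≤ n) :
    Polynomial.aeval x (∏ a ∈ (minpoly K x).roots.toFinset, (X - C a) ^ n) = 0 := by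
  obtain ⟨c, hc⟩ := (minpoly.monic hx).dvd_prod_X_sub_C_pow_of_splits hsplit hn
  rw [hc, map_mul, minpoly.aeval, zero_mul]

section Field

variable {K : Type*} [Field K] {C : Type*} [Category C] [Preadditive C] [Linear K C] {M : C}
  {e : M ⟶ M}

theorem not_mono_sub_smul_of_isRoot_minpoly (he : IsIntegral K (End.of e)) {α : K}
    (hα : (minpoly K (End.of e)).IsRoot α) : ¬ Mono (e - α • 𝟙 M) := by
  intro _
  have hfac := mul_divByMonic_eq_iff_isRoot.2 hα
  set ν := minpoly K (End.of e) /ₘ (X - Polynomial.C α)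
  have hν : aeval (End.of e) ν = 0 := by
    rw [← cancel_mono (e - α • 𝟙 M), Limits.zero_comp, sub_smul_id_eq_aeval]
    show aeval (End.of e) (X - Polynomial.C α) * aeval (End.of e) ν = 0
    rw [← map_mul, hfac, minpoly.aeval]
  have hν0 : ν ≠ 0 := fun h0 => minpoly.ne_zero he <| by rw [← hfac, h0, mul_zero]
  exact (minpoly.degree_le_of_ne_zero K _ hν0 hν).not_gt <|
    degree_divByMonic_lt _ _ (minpoly.ne_zero he) (by rw [degree_X_sub_C]; exact zero_lt_one)

variable [HasKernels C]

theorem isZero_kernel_compPow_sub_smul_iff (he : IsIntegral K (End.of e)) {n : ℕ}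
    (hn : (minpoly K (End.of e)).natDegree ≤ n) (α : K) :
    IsZero (kernel (compPow (e - α • 𝟙 M) n)) ↔ ¬ (minpoly K (End.of e)).IsRoot α := by
  refine ⟨fun hzero hα => ?_, fun hα => ?_⟩
  · have : Mono (compPow (e - α • 𝟙 M) n) := Preadditive.mono_of_isZero_kernel _ hzero
    have hn0 : n ≠ 0 := (natDegree_pos_iff_degree_pos.2
      (degree_pos_of_root (minpoly.ne_zero he) hα)).trans_le hn |>.ne'
    exact not_mono_sub_smul_of_isRoot_minpoly he hα (mono_of_mono_compPow _ hn0)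
  · have hcop : IsCoprime ((X - Polynomial.C α) ^ n) (minpoly K (End.of e)) :=
      ((irreducible_X_sub_C α).coprime_iff_not_dvd.2 (mt dvd_iff_isRoot.1 hα)).pow_left
    rw [compPow_sub_smul_eq_aeval]
    exact isZero_kernel_aeval_of_isCoprime e (minpoly.aeval K _) hcop

end Field

/-- **Generalized eigenspace decomposition of an object.**
Let `C` be a `ℂ`-linear abelian category and `M` an object with `End(M)`
finite-dimensional of dimension `d`.  For any endomorphism `e` of `M`, the set
`A = {α : M_α ≠ 0}` of generalized eigenvalues is finite (collected in a finite set `s`),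
and the canonical morphism `⨁_{α ∈ A} M_α → M` induced by the kernel inclusions is an
isomorphism.  Moreover, if `e` is an isomorphism, then `0 ∉ A`. -/
theorem stmt_4 {C : Type*} [Category C] [Abelian C] [CategoryTheory.Linear ℂ C]
    (M : C) [FiniteDimensional ℂ (M ⟶ M)] (e : M ⟶ M) :
    letI : HasFiniteBiproducts C := Abelian.hasFiniteBiproducts
    ∃ s : Finset ℂ,
      (∀ α : ℂ, ¬ IsZero (genEigenKer e (Module.finrank ℂ (M ⟶ M)) α) → α ∈ s) ∧
      (∀ α ∈ s, ¬ IsZero (genEigenKer e (Module.finrank ℂ (M ⟶ M)) α)) ∧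
      IsIso (biproduct.desc
        (f := fun α : s => genEigenKer e (Module.finrank ℂ (M ⟶ M)) (α : ℂ))
        (fun α => kernel.ι _)) ∧
      (IsIso e → (0 : ℂ) ∉ s) := by
  let _ : HasFiniteBiproducts C := Abelian.hasFiniteBiproducts
  have : FiniteDimensional ℂ (End M) := ‹FiniteDimensional ℂ (M ⟶ M)›
  set d := Module.finrank ℂ (M ⟶ M)
  set μ := minpoly ℂ (End.of e)
  have he : IsIntegral ℂ (End.of e) := .of_finite ℂ _
  have hd : μ.natDegree ≤ d := minpoly.natDegree_le _
  have hmem : ∀ α, α ∈ μ.roots.toFinset ↔ ¬ IsZero (genEigenKer e d α) := fun α => by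
    rw [genEigenKer, isZero_kernel_compPow_sub_smul_iff he hd, not_not, Multiset.mem_toFinset,
      mem_roots (minpoly.ne_zero he)]
  refine ⟨μ.roots.toFinset, fun α => (hmem α).2, fun α => (hmem α).1, ?_, fun _ h0 => ?_⟩
  · have hcop : Pairwise (IsCoprime on fun α : μ.roots.toFinset => (X - Polynomial.C α.1) ^ d) :=
      fun _ _ hne => (pairwise_coprime_X_sub_C Subtype.val_injective hne).pow
    refine isIso_biproduct_desc_kernel_ι_of_pairwise_isCoprime e hcop ?_ _
      (fun α => compPow_sub_smul_eq_aeval e α.1 d)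
    rw [Finset.prod_coe_sort μ.roots.toFinset (fun α => (X - Polynomial.C α) ^ d)]
    exact minpoly.aeval_prod_X_sub_C_pow_roots he (IsAlgClosed.splits μ) hd
  · exact not_mono_sub_smul_of_isRoot_minpoly he ((mem_roots (minpoly.ne_zero he)).1
      (Multiset.mem_toFinset.1 h0)) (by rw [zero_smul, sub_zero]; infer_instance)
end

section
/- Let R be a finite-dimensional unital ℂ-algebra, G a finitely generated abelian group, and ρ : G → Rˣ a group homomorphism into the group of units of R. Then there exist a finite set X of group homomorphisms χ : G → ℂˣ and nonzero idempotents (π_χ)_{χ∈X} lying in the commutative unital subalgebra of R generated by the image of ρ, such that π_χ π_ψ = 0 for χ ≠ ψ, Σ_{χ∈X} π_χ = 1, and for every g ∈ G and every χ ∈ X the element (ρ(g) − χ(g)·1)·π_χ is nilpotent. -/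
/-!
The image of `ρ` generates a commutative finite-dimensional subalgebra `A`, whose points
`φ : A →ₐ[ℂ] ℂ` are finitely many. The evaluation map `A → ℂ^{Hom(A, ℂ)}` is surjective by
Dedekind's independence of characters, and its kernel is nil because every prime of the Artinian
ring `A` is maximal with residue field `ℂ`. So the standard idempotents of `ℂ^{Hom(A, ℂ)}` lift
to complete orthogonal idempotents `e φ` of `A`, and `(a - φ a) * e φ` vanishes at every point,
hence is nilpotent. Grouping the `e φ` by the character `φ ∘ ρ` of `G` gives the `π χ`.
-/

open Finset

namespace OrthogonalIdempotents

variable {R I J : Type*} [Semiring R] [Fintype I] [DecidableEq J] {e : I → R}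

lemma sum_fiberwise (he : OrthogonalIdempotents e) (f : I → J) :
    OrthogonalIdempotents fun j ↦ ∑ i with f i = j, e i where
  idem _ := he.isIdempotentElem_sum
  ortho j k hjk := by
    dsimp only
    rw [sum_mul_sum]
    refine sum_eq_zero fun i hi ↦ sum_eq_zero fun i' hi' ↦ he.ortho ?_
    rintro rfl
    exact hjk ((mem_filter.mp hi).2.symm.trans (mem_filter.mp hi').2)

end OrthogonalIdempotents

theorem surjective_pi_algHom {K A : Type*} [Field K] [Ring A] [Algebra K A]
    [FiniteDimensional K A] :
    Function.Surjective (AlgHom.pi fun φ : A →ₐ[K] K ↦ φ) := by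
  have hli : LinearIndependent K fun φ : A →ₐ[K] K ↦ (φ : A → K) :=
    (linearIndependent_monoidHom A K).comp _ fun _ _ h ↦ AlgHom.ext (DFunLike.congr_fun h ·)
  have hspan := span_flip_eq_top_iff_linearIndependent.mpr hli
  have hrange : Set.range (flip fun φ : A →ₐ[K] K ↦ (φ : A → K)) =
      LinearMap.range (AlgHom.pi fun φ : A →ₐ[K] K ↦ φ).toLinearMap := rfl
  rwa [hrange, Submodule.span_eq, LinearMap.range_eq_top] at hspan

section AlgClosed

variable {K A : Type*} [Field K] [IsAlgClosed K] [CommRing A] [Algebra K A]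
  [FiniteDimensional K A]

theorem Ideal.exists_algHom_ker_eq_of_isMaximal (I : Ideal A) [I.IsMaximal] :
    ∃ φ : A →ₐ[K] K, RingHom.ker φ = I := by
  let := Ideal.Quotient.field I
  have : Module.Finite K (A ⧸ I) := Module.Finite.of_surjective
    (Ideal.Quotient.mkₐ K I).toLinearMap (Ideal.Quotient.mkₐ_surjective K I)
  let residue : (A ⧸ I) ≃ₐ[K] K :=
    (AlgEquiv.ofBijective (Algebra.ofId K _) IsAlgClosed.algebraMap_bijective_of_isIntegral).symm
  refine ⟨residue.toAlgHom.comp (Ideal.Quotient.mkₐ K I), ?_⟩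
  ext x
  simp [Ideal.Quotient.eq_zero_iff_mem]

theorem isNilpotent_of_forall_algHom_apply_eq_zero {x : A}
    (hx : ∀ φ : A →ₐ[K] K, φ x = 0) : IsNilpotent x := by
  have : IsArtinianRing A := IsArtinianRing.of_finite K A
  rw [← mem_nilradical, IsArtinianRing.nilradical_eq_iInf, Ideal.mem_iInf]
  intro I
  obtain ⟨φ, hφ⟩ := I.asIdeal.exists_algHom_ker_eq_of_isMaximal (K := K)
  exact hφ ▸ hx φ

open Classical in
theorem exists_completeOrthogonalIdempotents_algHom_apply :
    ∃ e : (A →ₐ[K] K) → A, CompleteOrthogonalIdempotents e ∧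
      ∀ φ ψ : A →ₐ[K] K, φ (e ψ) = Pi.single (M := fun _ ↦ K) ψ 1 φ := by
  obtain ⟨e, he, hlift⟩ := CompleteOrthogonalIdempotents.lift_of_isNilpotent_ker
    (AlgHom.pi fun φ : A →ₐ[K] K ↦ φ).toRingHom
    (fun x hx ↦ isNilpotent_of_forall_algHom_apply_eq_zero fun φ ↦ congrFun hx φ)
    (CompleteOrthogonalIdempotents.single fun _ : A →ₐ[K] K ↦ K)
    (fun _ ↦ surjective_pi_algHom _)
  exact ⟨e, he, fun φ ψ ↦ congrFun (congrFun hlift ψ) φ⟩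

open Classical in
theorem isNilpotent_sub_algebraMap_mul {e : (A →ₐ[K] K) → A}
    (he : ∀ φ ψ : A →ₐ[K] K, φ (e ψ) = Pi.single (M := fun _ ↦ K) ψ 1 φ)
    (a : A) (φ : A →ₐ[K] K) :
    IsNilpotent ((a - algebraMap K A (φ a)) * e φ) := by
  refine isNilpotent_of_forall_algHom_apply_eq_zero (K := K) fun ψ ↦ ?_
  rw [map_mul, map_sub, AlgHom.commutes, he]
  by_cases h : ψ = φ <;> simp [h]

theorem exists_character_decomposition {G : Type*} [Monoid G] (ρ : G →* Aˣ) :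
    ∃ (X : Finset (G →* Kˣ)) (π : (G →* Kˣ) → A),
      (∀ χ ∈ X, π χ ≠ 0) ∧ OrthogonalIdempotents π ∧ ∑ χ ∈ X, π χ = 1 ∧
      ∀ g, ∀ χ ∈ X, IsNilpotent (((ρ g : A) - algebraMap K A (χ g)) * π χ) := by
  classical
  obtain ⟨e, he, hev⟩ := exists_completeOrthogonalIdempotents_algHom_apply (K := K) (A := A)
  let character (φ : A →ₐ[K] K) : G →* Kˣ := (Units.map (φ : A →* K)).comp ρ
  refine ⟨univ.image character, fun χ ↦ ∑ φ with character φ = χ, e φ, ?_,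
    he.1.sum_fiberwise character, ?_, ?_⟩
  · intro χ hχ hzero
    obtain ⟨φ, -, rfl⟩ := mem_image.mp hχ
    have := congrArg φ hzero
    simp [map_sum, hev] at this
  · rw [sum_fiberwise_of_maps_to fun φ _ ↦ mem_image_of_mem character (mem_univ φ)]
    exact he.complete
  · intro g χ _
    rw [mul_sum]
    refine isNilpotent_sum fun φ hφ ↦ ?_
    rw [← (mem_filter.mp hφ).2]
    exact isNilpotent_sub_algebraMap_mul hev _ φ

end AlgClosed

theorem stmt_5_general (R : Type*) [Ring R] [Algebra ℂ R] [FiniteDimensional ℂ R]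
    (G : Type*) [CommGroup G] (ρ : G →* Rˣ) :
    ∃ (X : Finset (G →* ℂˣ)) (π : (G →* ℂˣ) → R),
      (∀ χ ∈ X, π χ ≠ 0) ∧
      (∀ χ ∈ X, IsIdempotentElem (π χ)) ∧
      (∀ χ ∈ X, π χ ∈ Algebra.adjoin ℂ (Set.range fun g : G => ((ρ g : Rˣ) : R))) ∧
      (∀ χ ∈ X, ∀ ψ ∈ X, χ ≠ ψ → π χ * π ψ = 0) ∧
      (∑ χ ∈ X, π χ) = 1 ∧
      (∀ g : G, ∀ χ ∈ X, IsNilpotent (((ρ g : R) - algebraMap ℂ R (χ g)) * π χ)) := by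
  let A := Algebra.adjoin ℂ (Set.range fun g : G => ((ρ g : Rˣ) : R))
  have : IsMulCommutative A := Algebra.isMulCommutative_adjoin ℂ <| by
    rintro _ ⟨g, rfl⟩ _ ⟨h, rfl⟩
    simp only [← Units.val_mul, ← map_mul, mul_comm g h]
  let ρA : G →* Aˣ := MonoidHom.toHomUnits
    { toFun g := ⟨ρ g, Algebra.subset_adjoin ⟨g, rfl⟩⟩
      map_one' := by ext; simp
      map_mul' _ _ := by ext; simp }
  obtain ⟨X, π, hne, horth, hsum, hnil⟩ :=
    open scoped IsMulCommutative in exists_character_decomposition (K := ℂ) ρA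
  have hπ := horth.map A.val.toRingHom
  refine ⟨X, fun χ ↦ π χ, fun χ hχ ↦ by simpa using hne χ hχ, fun χ _ ↦ hπ.idem χ,
    fun χ _ ↦ (π χ).2, fun χ _ ψ _ h ↦ hπ.ortho h, by simpa using congrArg A.val hsum,
    fun g χ hχ ↦ by simpa [ρA] using (hnil g χ hχ).map A.val⟩

/-- **Monodromy block decomposition, algebraic form.**
Let `R` be a finite-dimensional unital `ℂ`-algebra, `G` a finitely generated abelian
group and `ρ : G → Rˣ` a group homomorphism.  Then there is a finite set `X` of
characters `χ : G → ℂˣ` and nonzero idempotents `π χ` lying in the (commutative unital)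
subalgebra of `R` generated by the image of `ρ`, which are pairwise orthogonal, sum to `1`,
and such that `(ρ g − χ g · 1) · π χ` is nilpotent for all `g ∈ G`, `χ ∈ X`. -/
theorem stmt_5 (R : Type*) [Ring R] [Algebra ℂ R] [FiniteDimensional ℂ R]
    (G : Type*) [CommGroup G] [Group.FG G] (ρ : G →* Rˣ) :
    ∃ (X : Finset (G →* ℂˣ)) (π : (G →* ℂˣ) → R),
      (∀ χ ∈ X, π χ ≠ 0) ∧
      (∀ χ ∈ X, IsIdempotentElem (π χ)) ∧
      (∀ χ ∈ X, π χ ∈ Algebra.adjoin ℂ (Set.range fun g : G => ((ρ g : Rˣ) : R))) ∧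
      (∀ χ ∈ X, ∀ ψ ∈ X, χ ≠ ψ → π χ * π ψ = 0) ∧
      (∑ χ ∈ X, π χ) = 1 ∧
      (∀ g : G, ∀ χ ∈ X, IsNilpotent (((ρ g : R) - algebraMap ℂ R (χ g)) * π χ)) :=
  stmt_5_general R G ρ
end

section
/- Let C be a ℂ-linear abelian braided monoidal category with simple unit object, biexact tensor product, finite-dimensional Hom-spaces, in which every object has finite length. Let G be a finite abelian group, {S_g}_{g∈G} a family of simple invertible objects with S_e = 𝟙, and let E be a commutative algebra object of C whose underlying object is ⨁_{g∈G} S_g, whose unit ι : 𝟙 → E is the inclusion of the summand S_e, and whose multiplication μ_E restricts to a nonzero morphism S_g ⊗ S_h → S_{gh} for all g, h ∈ G (condition (S1)). Assume the G-action on isomorphism classes of simple objects of C given by g·[M] = [S_g ⊗ M] is fixed-point free (condition (S2): S_g ⊗ M ≅ M for some simple M implies g = e). Then for every simple object M of C, the induced E-module F(M) = E ⊗ M, with action map (μ_E ⊗ id_M) composed with the associativity isomorphism E ⊗ (E ⊗ M) ≅ (E ⊗ E) ⊗ M, is a simple object of the category Rep(E) of E-modules. -/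
open CategoryTheory MonoidalCategory Limits

/-- The free (induced) `E`-module `F(M) = E ⊗ M` on an object `M`, with action
`(μ_E ⊗ id_M)` composed with the associativity isomorphism
`E ⊗ (E ⊗ M) ≅ (E ⊗ E) ⊗ M`. -/
def freeMod {C : Type*} [Category C] [MonoidalCategory C] (E : Mon C) (M : C) :
    Mod C E.X where
  X := E.X ⊗ M
  mod := {
  smul := (α_ E.X E.X M).inv ≫ (E.mon.mul ▷ M)
  one_smul := by
    dsimp
    slice_lhs 1 2 => rw [associator_inv_naturality_left]
    slice_lhs 2 3 => rw [← comp_whiskerRight, MonObj.one_mul]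
    rw [← leftUnitor_tensor_hom]
  mul_smul := by
    dsimp
    slice_lhs 1 2 => rw [associator_inv_naturality_left]
    slice_lhs 2 3 => rw [← comp_whiskerRight, MonObj.mul_assoc]
    simp only [comp_whiskerRight, Category.assoc, MonoidalCategory.whiskerLeft_comp]
    slice_rhs 3 4 => rw [associator_inv_naturality_middle]
    have pent : (α_ (E.X ⊗ E.X) E.X M).inv ≫ ((α_ E.X E.X E.X).hom ▷ M) =
        (α_ E.X E.X (E.X ⊗ M)).hom ≫ (E.X ◁ (α_ E.X E.X M).inv) ≫
          (α_ E.X (E.X ⊗ E.X) M).inv := by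
      monoidal
    slice_lhs 1 2 => rw [pent]
    simp only [Category.assoc] }

/-- An object `N` of `Rep(E) = Mod_ E` is simple: it is nonzero, and every monomorphism
into it is either an isomorphism or has zero source. -/
def IsSimpleMod {C : Type*} [Category C] [MonoidalCategory C] {E : Mon C}
    (N : Mod C E.X) : Prop :=
  ¬ IsZero N ∧ ∀ (P : Mod C E.X) (f : P ⟶ N), Mono f → (IsIso f ∨ IsZero P)

/-!
Write `E ≅ ⨁ S_g`, so that `E ⊗ M ≅ ⨁ S_g ⊗ M`; each `S_g ⊗ M` is simple because `S_g` is
invertible, and by (S2) there is no nonzero morphism `M ⟶ S_g ⊗ M` for `g ≠ 1`. Together with (S2),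
condition (S1) says that multiplication maps `S_g ⊗ S_h` isomorphically onto `S_{gh}` and to zero
in every other summand.

Let `P ⊆ F(M)` be a nonzero submodule. A simple subobject of `P` maps isomorphically onto some
summand `S_g ⊗ M`; acting on it with `S_{g⁻¹} ⊆ E` gives a morphism into `P` that maps
isomorphically onto `S_1 ⊗ M`. Since morphisms `M ⟶ E ⊗ M` are determined by their
`S_1 ⊗ M`-component, the unit `M ⟶ E ⊗ M` factors through `P`, and by Frobenius reciprocity
`Hom_E(F(M), P) ≅ Hom(M, P)` the inclusion `P ⟶ F(M)` is then a split epimorphism.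
-/

namespace CategoryTheory

section Invertible

variable {C : Type*} [Category C] [MonoidalCategory C]

def tensorLeftEquivalence {S T : C} (e : T ⊗ S ≅ 𝟙_ C) (e' : S ⊗ T ≅ 𝟙_ C) : C ≌ C :=
  Equivalence.mk (tensorLeft S) (tensorLeft T)
    (NatIso.ofComponents (fun X => (λ_ X).symm ≪≫ whiskerRightIso e.symm X ≪≫ α_ T S X)
      fun f => by
        dsimp
        simp only [whiskerRightIso_hom, Iso.symm_hom, Category.assoc]
        rw [← associator_naturality_right,
          ← whisker_exchange_assoc, leftUnitor_inv_naturality_assoc])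
    (NatIso.ofComponents (fun X => (α_ S T X).symm ≪≫ whiskerRightIso e' X ≪≫ λ_ X)
      fun f => by
        dsimp
        simp only [whiskerRightIso_hom, Category.assoc]
        rw [associator_inv_naturality_right_assoc,
          whisker_exchange_assoc, leftUnitor_naturality])

theorem simple_tensor_of_inverse [HasZeroMorphisms C] {S T : C} (e : T ⊗ S ≅ 𝟙_ C)
    (e' : S ⊗ T ≅ 𝟙_ C) (X : C) [Simple X] : Simple (S ⊗ X) :=
  simple_obj (tensorLeftEquivalence e e').functor X

end Invertible

section FreeModule

variable {C : Type*} [Category C] [MonoidalCategory C] {E : Mon C}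

def freeModUnit (E : Mon C) (M : C) : M ⟶ E.X ⊗ M := (λ_ M).inv ≫ E.mon.one ▷ M

def freeModLift {M : C} {P : Mod C E.X} (χ : M ⟶ P.X) : freeMod E M ⟶ P :=
  Mod.Hom.mk' ((E.X ◁ χ) ≫ P.mod.smul) <| by
    change ((α_ E.X E.X M).inv ≫ E.mon.mul ▷ M) ≫ E.X ◁ χ ≫ P.mod.smul =
      E.X ◁ ((E.X ◁ χ) ≫ P.mod.smul) ≫ P.mod.smul
    rw [Category.assoc, ← whisker_exchange_assoc, ← associator_inv_naturality_right_assoc]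
    simp

theorem freeModUnit_comp_freeModLift_hom {M : C} {P : Mod C E.X} (χ : M ⟶ P.X) :
    freeModUnit E M ≫ (freeModLift χ).hom = χ := by
  change freeModUnit E M ≫ E.X ◁ χ ≫ P.mod.smul = χ
  rw [freeModUnit, Category.assoc, ← whisker_exchange_assoc]
  simp

theorem freeModLift_comp {M : C} {P Q : Mod C E.X} (χ : M ⟶ P.X) (f : P ⟶ Q) :
    freeModLift χ ≫ f = freeModLift (χ ≫ f.hom) := by
  ext
  change (E.X ◁ χ ≫ P.mod.smul) ≫ f.hom = E.X ◁ (χ ≫ f.hom) ≫ Q.mod.smul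
  simp

theorem freeModLift_freeModUnit (M : C) : freeModLift (freeModUnit E M) = 𝟙 (freeMod E M) := by
  ext
  change E.X ◁ freeModUnit E M ≫ (α_ E.X E.X M).inv ≫ E.mon.mul ▷ M = 𝟙 (E.X ⊗ M)
  rw [freeModUnit, MonoidalCategory.whiskerLeft_comp_assoc,
    associator_inv_naturality_middle_assoc, ← comp_whiskerRight, MonObj.mul_one]
  monoidal

theorem Mod.mono_hom_of_mono {P Q : Mod C E.X} (f : P ⟶ Q) [Mono f] : Mono f.hom where
  right_cancellation a b h := by
    have : freeModLift a = freeModLift b := by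
      rw [← cancel_mono f, freeModLift_comp, freeModLift_comp, h]
    rw [← freeModUnit_comp_freeModLift_hom a, this, freeModUnit_comp_freeModLift_hom]

theorem isSplitEpi_of_comp_hom_eq_freeModUnit {M : C} {P : Mod C E.X} (f : P ⟶ freeMod E M)
    (χ : M ⟶ P.X) (hχ : χ ≫ f.hom = freeModUnit E M) : IsSplitEpi f :=
  ⟨freeModLift χ, by rw [freeModLift_comp, hχ, freeModLift_freeModUnit]⟩

theorem Mod.isZero_iff [Preadditive C] [MonoidalPreadditive C] (P : Mod C E.X) :
    IsZero P ↔ IsZero P.X := by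
  refine ⟨fun h => ?_, fun h => ?_⟩
  · rw [IsZero.iff_id_eq_zero]
    exact congr(($(h.eq_of_src (𝟙 P) (Mod.Hom.mk' 0))).hom)
  · refine ⟨fun Q => ⟨⟨⟨Mod.Hom.mk' 0⟩, fun f => ?_⟩⟩, fun Q => ⟨⟨⟨Mod.Hom.mk' 0⟩, fun f => ?_⟩⟩⟩
    · ext; exact h.eq_of_src _ _
    · ext; exact h.eq_of_tgt _ _

end FreeModule

section Summands

variable {C : Type*} [Category C] [Preadditive C] {G : Type*} {S : G → C} [HasBiproduct S]

noncomputable abbrev summandι {X : C} (φ : X ≅ ⨁ S) (g : G) : S g ⟶ X := biproduct.ι S g ≫ φ.inv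

noncomputable abbrev summandπ {X : C} (φ : X ≅ ⨁ S) (g : G) : X ⟶ S g := φ.hom ≫ biproduct.π S g

theorem sum_summandπ_comp_summandι [Fintype G] {X : C} (φ : X ≅ ⨁ S) :
    ∑ g, summandπ φ g ≫ summandι φ g = 𝟙 X := by
  classical
  -- `biproduct.total` only covers index types in `Type`, while `G` lives in an arbitrary universe.
  have total : ∑ g, biproduct.π S g ≫ biproduct.ι S g = 𝟙 (⨁ S) := by
    ext g
    simp [Preadditive.sum_comp, biproduct.ι_π, comp_dite]
  calc ∑ g, summandπ φ g ≫ summandι φ g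
      = φ.hom ≫ (∑ g, biproduct.π S g ≫ biproduct.ι S g) ≫ φ.inv := by
        simp only [Preadditive.comp_sum, Preadditive.sum_comp, Category.assoc]
    _ = 𝟙 X := by rw [total, Category.id_comp, Iso.hom_inv_id]

variable [MonoidalCategory C]

theorem not_isZero_tensor_of_summand {X M : C} (φ : X ≅ ⨁ S) {g : G} (h : ¬IsZero (S g ⊗ M)) :
    ¬IsZero (X ⊗ M) := fun hz => h <| (IsZero.iff_id_eq_zero _).2 <|
  calc 𝟙 (S g ⊗ M) = summandι φ g ▷ M ≫ summandπ φ g ▷ M := by simp [← comp_whiskerRight]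
    _ = 0 := by rw [hz.eq_of_src (summandπ φ g ▷ M) 0, comp_zero]

noncomputable abbrev mulSummand {E : Mon C} (φ : E.X ≅ ⨁ S) (g h k : G) : S g ⊗ S h ⟶ S k :=
  (summandι φ g ⊗ₘ summandι φ h) ≫ E.mon.mul ≫ summandπ φ k

variable [MonoidalPreadditive C] [Fintype G]

theorem eq_sum_comp_whiskerRight_summand {X M Z : C} (φ : X ≅ ⨁ S) (y : Z ⟶ X ⊗ M) :
    y = ∑ g, y ≫ summandπ φ g ▷ M ≫ summandι φ g ▷ M := by
  simp only [← Preadditive.comp_sum, ← comp_whiskerRight, ← sum_whiskerRight,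
    sum_summandπ_comp_summandι, id_whiskerRight, Category.comp_id]

theorem whiskerRight_summandπ_hom_ext {X M Z : C} (φ : X ≅ ⨁ S) {y y' : Z ⟶ X ⊗ M}
    (h : ∀ g, y ≫ summandπ φ g ▷ M = y' ≫ summandπ φ g ▷ M) : y = y' := by
  rw [eq_sum_comp_whiskerRight_summand φ y, eq_sum_comp_whiskerRight_summand φ y']
  simp only [← Category.assoc, h]

theorem whiskerLeft_comp_summandι_mul_summandπ {E : Mon C} (φ : E.X ≅ ⨁ S) {M Z : C}
    (y : Z ⟶ E.X ⊗ M) (h k : G) :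
    S h ◁ y ≫ summandι φ h ▷ (E.X ⊗ M) ≫ (α_ E.X E.X M).inv ≫ E.mon.mul ▷ M ≫
        summandπ φ k ▷ M =
      ∑ b, S h ◁ (y ≫ summandπ φ b ▷ M) ≫ (α_ (S h) (S b) M).inv ≫ mulSummand φ h b k ▷ M := by
  conv_lhs => rw [eq_sum_comp_whiskerRight_summand φ y]
  rw [whiskerLeft_sum, Preadditive.sum_comp]
  refine Finset.sum_congr rfl fun b _ => ?_
  simp only [MonoidalCategory.whiskerLeft_comp, Category.assoc]
  congr 2
  rw [whisker_exchange_assoc, associator_inv_naturality_middle_assoc,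
    associator_inv_naturality_left_assoc, mulSummand, MonoidalCategory.tensorHom_def]
  simp only [Category.assoc, comp_whiskerRight]

end Summands

section SimpleCurrents

variable {C : Type*} [Category C] [Abelian C] [MonoidalCategory C] {G : Type*} {S : G → C}

def IsFixedPointFree [One G] (S : G → C) : Prop :=
  ∀ (g : G) (M : C), Simple M → Nonempty (S g ⊗ M ≅ M) → g = 1

theorem IsFixedPointFree.hom_eq_zero [One G] (hS2 : IsFixedPointFree S) {M : C} [Simple M]
    {g : G} [Simple (S g ⊗ M)] (hg : g ≠ 1) (x : M ⟶ S g ⊗ M) : x = 0 := by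
  by_contra hx
  have := isIso_of_hom_simple hx
  exact hg (hS2 g M inferInstance ⟨(asIso x).symm⟩)

variable [HasBiproduct S]

section MulSummand

variable [Group G] {E : Mon C} {φ : E.X ≅ ⨁ S}

theorem isIso_mulSummand (hST : ∀ g (X : C), Simple X → Simple (S g ⊗ X))
    (hS : ∀ g, Simple (S g)) (hS1 : ∀ g h : G, mulSummand φ g h (g * h) ≠ 0) (g h : G) :
    IsIso (mulSummand φ g h (g * h)) :=
  have := hST g (S h) (hS h)
  isIso_of_hom_simple (hS1 g h)

theorem mulSummand_eq_zero_of_ne (hST : ∀ g (X : C), Simple X → Simple (S g ⊗ X))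
    (hS : ∀ g, Simple (S g)) (hS1 : ∀ g h : G, mulSummand φ g h (g * h) ≠ 0)
    (hS2 : IsFixedPointFree S) {g h k : G} (hk : k ≠ g * h) : mulSummand φ g h k = 0 := by
  by_contra hne
  obtain ⟨c, rfl⟩ : ∃ c, k = c * (g * h) := ⟨k * (g * h)⁻¹, by group⟩
  have := hST g (S h) (hS h)
  have := isIso_of_hom_simple hne
  have := isIso_mulSummand hST hS hS1
  have hc := hS2 c (S (g * h)) (hS _)
    ⟨asIso (mulSummand φ c (g * h) _) ≪≫ (asIso (mulSummand φ g h (c * (g * h)))).symm ≪≫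
      asIso (mulSummand φ g h (g * h))⟩
  exact hk (by rw [hc, one_mul])

end MulSummand

variable [MonoidalPreadditive C] [Fintype G]

theorem eq_of_comp_whiskerRight_summandπ_one [One G]
    (hST : ∀ g (X : C), Simple X → Simple (S g ⊗ X)) (hS2 : IsFixedPointFree S)
    {X M : C} [Simple M] (φ : X ≅ ⨁ S) {ξ ξ' : M ⟶ X ⊗ M}
    (h : ξ ≫ summandπ φ 1 ▷ M = ξ' ≫ summandπ φ 1 ▷ M) : ξ = ξ' := by
  refine whiskerRight_summandπ_hom_ext φ fun g => ?_
  obtain rfl | hg := eq_or_ne g 1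
  · exact h
  · have := hST g M inferInstance
    rw [hS2.hom_eq_zero hg (ξ ≫ _), hS2.hom_eq_zero hg (ξ' ≫ _)]

theorem exists_isIso_comp_whiskerRight_summandπ
    (hST : ∀ g (X : C), Simple X → Simple (S g ⊗ X)) {X M Y : C} [Simple M] (φ : X ≅ ⨁ S)
    [IsArtinianObject Y] (hY : ¬IsZero Y) (u : Y ⟶ X ⊗ M) [Mono u] :
    ∃ (N : C) (_ : Simple N) (n : N ⟶ Y) (g : G), IsIso (n ≫ u ≫ summandπ φ g ▷ M) := by
  obtain ⟨N, hN⟩ := exists_simple_subobject hY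
  have hNu : N.arrow ≫ u ≠ 0 := fun h => Simple.not_isZero _ (IsZero.of_mono_eq_zero _ h)
  obtain ⟨g, hg⟩ : ∃ g, N.arrow ≫ u ≫ summandπ φ g ▷ M ≠ 0 := by
    by_contra! h
    exact hNu (whiskerRight_summandπ_hom_ext φ fun g => by simpa using h g)
  have := hST g M inferInstance
  exact ⟨N, hN, N.arrow, g, isIso_of_hom_simple hg⟩

variable [Group G] {E : Mon C} {φ : E.X ≅ ⨁ S}

theorem whiskerLeft_comp_summandι_smul_comp_summandπ
    (hST : ∀ g (X : C), Simple X → Simple (S g ⊗ X))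
    (hS : ∀ g, Simple (S g)) (hS1 : ∀ g h : G, mulSummand φ g h (g * h) ≠ 0)
    (hS2 : IsFixedPointFree S) {M N : C} {P : Mod C E.X} (u : P.X ⟶ E.X ⊗ M)
    (hu : P.mod.smul ≫ u = E.X ◁ u ≫ (α_ E.X E.X M).inv ≫ E.mon.mul ▷ M) (n : N ⟶ P.X)
    (g h : G) :
    S h ◁ n ≫ summandι φ h ▷ P.X ≫ P.mod.smul ≫ u ≫ summandπ φ (h * g) ▷ M =
      S h ◁ (n ≫ u ≫ summandπ φ g ▷ M) ≫ (α_ (S h) (S g) M).inv ≫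
        mulSummand φ h g (h * g) ▷ M := by
  calc S h ◁ n ≫ summandι φ h ▷ P.X ≫ P.mod.smul ≫ u ≫ summandπ φ (h * g) ▷ M
      = S h ◁ (n ≫ u) ≫ summandι φ h ▷ (E.X ⊗ M) ≫ (α_ E.X E.X M).inv ≫ E.mon.mul ▷ M ≫
          summandπ φ (h * g) ▷ M := by
        rw [reassoc_of% hu, ← whisker_exchange_assoc, MonoidalCategory.whiskerLeft_comp_assoc]
    _ = ∑ b, S h ◁ (n ≫ u ≫ summandπ φ b ▷ M) ≫ (α_ (S h) (S b) M).inv ≫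
          mulSummand φ h b (h * g) ▷ M := by
        simpa only [Category.assoc] using
          whiskerLeft_comp_summandι_mul_summandπ φ (n ≫ u) h (h * g)
    _ = _ := by
        refine Finset.sum_eq_single g (fun b _ hb => ?_) (by simp)
        rw [mulSummand_eq_zero_of_ne hST hS hS1 hS2 (by simpa using hb.symm),
          MonoidalPreadditive.zero_whiskerRight, comp_zero, comp_zero]

theorem exists_isIso_comp_whiskerRight_summandπ_one
    (hST : ∀ g (X : C), Simple X → Simple (S g ⊗ X))
    (hS : ∀ g, Simple (S g)) (hS1 : ∀ g h : G, mulSummand φ g h (g * h) ≠ 0)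
    (hS2 : IsFixedPointFree S) {M : C} [Simple M] {P : Mod C E.X} [IsArtinianObject P.X]
    (hP : ¬IsZero P.X) (u : P.X ⟶ E.X ⊗ M) [Mono u]
    (hu : P.mod.smul ≫ u = E.X ◁ u ≫ (α_ E.X E.X M).inv ≫ E.mon.mul ▷ M) :
    ∃ (Y : C) (v : Y ⟶ P.X), IsIso (v ≫ u ≫ summandπ φ 1 ▷ M) := by
  obtain ⟨N, _, n, g, hn⟩ := exists_isIso_comp_whiskerRight_summandπ hST φ hP u
  have := isIso_mulSummand hST hS hS1 g⁻¹ g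
  have hv : IsIso (S g⁻¹ ◁ (n ≫ u ≫ summandπ φ g ▷ M) ≫ (α_ (S g⁻¹) (S g) M).inv ≫
      mulSummand φ g⁻¹ g (g⁻¹ * g) ▷ M) := inferInstance
  rw [← whiskerLeft_comp_summandι_smul_comp_summandπ hST hS hS1 hS2 u hu, inv_mul_cancel] at hv
  exact ⟨_, S g⁻¹ ◁ n ≫ summandι φ g⁻¹ ▷ P.X ≫ P.mod.smul, by
    simpa only [Category.assoc] using hv⟩

theorem exists_comp_eq_freeModUnit_of_isIso (hST : ∀ g (X : C), Simple X → Simple (S g ⊗ X))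
    (hS2 : IsFixedPointFree S) {M Y Z : C} [Simple M] (u : Z ⟶ E.X ⊗ M) (v : Y ⟶ Z)
    [IsIso (v ≫ u ≫ summandπ φ 1 ▷ M)] :
    ∃ χ : M ⟶ Z, χ ≫ u = freeModUnit E M := by
  refine ⟨freeModUnit E M ≫ summandπ φ 1 ▷ M ≫ inv (v ≫ u ≫ summandπ φ 1 ▷ M) ≫ v,
    eq_of_comp_whiskerRight_summandπ_one hST hS2 φ ?_⟩
  simp only [Category.assoc, IsIso.inv_hom_id, Category.comp_id]

end SimpleCurrents

end CategoryTheory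

/-- **Induction of simple objects along a categorical simple current extension is simple.**
Let `C` be a `ℂ`-linear abelian braided monoidal category with simple unit, biexact
tensor product, finite-dimensional Hom-spaces, all of whose objects have finite length
(Noetherian and Artinian).  Let `G` be a finite abelian group, `{S_g}` a family of simple
invertible objects with `S_e ≅ 𝟙`, and `E` a commutative algebra object with underlying
object `⨁_g S_g`, unit the inclusion of the summand `S_e`, and multiplication restricting
to nonzero morphisms `S_g ⊗ S_h ⟶ S_{gh}` (S1), such that the `G`-action on isomorphism
classes of simple objects is fixed-point free (S2).  Then for every simple object `M` of
`C`, the induced module `F(M) = E ⊗ M` is a simple `E`-module. -/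
theorem stmt_6 {C : Type*} [Category C] [Abelian C] [CategoryTheory.Linear ℂ C]
    [MonoidalCategory C] [BraidedCategory C] [MonoidalPreadditive C] [MonoidalLinear ℂ C]
    [Simple (𝟙_ C)]
    [∀ X : C, PreservesFiniteLimits (tensorLeft X)]
    [∀ X : C, PreservesFiniteColimits (tensorLeft X)]
    [∀ X : C, PreservesFiniteLimits (tensorRight X)]
    [∀ X : C, PreservesFiniteColimits (tensorRight X)]
    (hfd : ∀ X Y : C, FiniteDimensional ℂ (X ⟶ Y))
    (hfl : ∀ X : C, IsNoetherianObject X ∧ IsArtinianObject X)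
    (G : Type*) [CommGroup G] [Fintype G]
    (S : G → C) (hSsimple : ∀ g : G, Simple (S g))
    (Sd : G → C) [∀ g : G, ExactPairing (S g) (Sd g)]
    (hev : ∀ g : G, IsIso (ε_ (S g) (Sd g))) (hcoev : ∀ g : G, IsIso (η_ (S g) (Sd g)))
    (Se : S 1 ≅ 𝟙_ C)
    (E : Mon C)
    (φ : letI : HasFiniteBiproducts C := Abelian.hasFiniteBiproducts
         E.X ≅ ⨁ S)
    (hcomm : (β_ E.X E.X).hom ≫ E.mon.mul = E.mon.mul)
    (hone : letI : HasFiniteBiproducts C := Abelian.hasFiniteBiproducts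
      E.mon.one = Se.inv ≫ biproduct.ι S 1 ≫ φ.inv)
    (hS1 : letI : HasFiniteBiproducts C := Abelian.hasFiniteBiproducts
      ∀ g h : G,
        ((biproduct.ι S g ≫ φ.inv) ⊗ₘ (biproduct.ι S h ≫ φ.inv)) ≫ E.mon.mul ≫ φ.hom ≫
            biproduct.π S (g * h) ≠ 0)
    (hS2 : ∀ (g : G) (M : C), Simple M → Nonempty (S g ⊗ M ≅ M) → g = 1) :
    ∀ M : C, Simple M → IsSimpleMod (freeMod E M) := by
  let : HasFiniteBiproducts C := Abelian.hasFiniteBiproducts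
  have hST : ∀ g (X : C), Simple X → Simple (S g ⊗ X) := fun g X _ =>
    have := hev g
    have := hcoev g
    simple_tensor_of_inverse (asIso (ε_ (S g) (Sd g))) (asIso (η_ (S g) (Sd g))).symm X
  intro M hM
  refine ⟨fun h => ?_, fun P f hf => ?_⟩
  · exact not_isZero_tensor_of_summand φ (hST 1 M hM).not_isZero ((Mod.isZero_iff _).1 h)
  by_cases hP : IsZero P
  · exact Or.inr hP
  have := (hfl P.X).2
  have : Mono (Y := E.X ⊗ M) f.hom := Mod.mono_hom_of_mono f
  obtain ⟨Y, v, hv⟩ := exists_isIso_comp_whiskerRight_summandπ_one hST hSsimple hS1 hS2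
    ((Mod.isZero_iff P).not.1 hP) f.hom f.isModHom.smul_hom
  obtain ⟨χ, hχ⟩ := exists_comp_eq_freeModUnit_of_isIso (φ := φ) hST hS2 f.hom v
  have := isSplitEpi_of_comp_hom_eq_freeModUnit f χ hχ
  exact Or.inl (isIso_of_mono_of_isSplitEpi f)
end

section
/- Let n ≥ 2 and r ≥ 1 be integers. Let X be the set of pairs (λ, a) where λ : ZMod r → ℕ satisfies Σ_{i ∈ ZMod r} λ(i) = n, a ∈ ZMod (n·r), and the image of a under the natural projection ZMod(n·r) → ZMod r equals the weight w(λ) := Σ_{i ∈ ZMod r} i·λ(i) computed in ZMod r. Let the group ZMod r act on X by m·(λ, a) = (σ^m λ, a + m·n), where (σ^m λ)(i) = λ(i − m) is the cyclic shift and m·n is computed in ZMod(n·r) via any integer lift of m (well defined since r·n ≡ 0 in ZMod(n·r)). Then this action is free, and the number of orbits equals the binomial coefficient C(n + r − 1, n − 1). -/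
/-! Translating by `m` moves the second coordinate by `m.val * n` in `ZMod (n * r)`, which
vanishes only for `m = 0`; so the action is free and `|X| = r · #orbits`. On the other hand `X`
fibres over the `C(r + n - 1, n)` admissible `λ`, each fibre being a coset of the kernel of
`ZMod (n * r) → ZMod r`, which has `n` elements. Hence
`#orbits = n · C(n + r - 1, n) / r = C(n + r - 1, n - 1)`. -/

/-- The defining condition for the parameter set `X` of simple modules of the rational
subregular W-algebra `W_sb(n,r)`: a pair `(λ, a)` with `λ : ZMod r → ℕ` of total sum `n`
and `a : ZMod (n·r)` whose reduction mod `r` equals the weight `Σ i·λ(i) ∈ ZMod r`. -/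
def subregCond (n r : ℕ) (p : (ZMod r → ℕ) × ZMod (n * r)) : Prop :=
  (∑ i ∈ Finset.range r, p.1 (i : ZMod r)) = n ∧
  ZMod.castHom (dvd_mul_left r n) (ZMod r) p.2 =
    ∑ i ∈ Finset.range r, (i : ZMod r) * (p.1 (i : ZMod r) : ZMod r)

/-- The `ZMod r`-action: `m · (λ, a) = (σ^m λ, a + m·n)`, where `(σ^m λ)(i) = λ(i − m)`
and `m·n` is computed in `ZMod (n·r)` via the integer lift `m.val`. -/
def subregAct (n r : ℕ) (m : ZMod r) (p : (ZMod r → ℕ) × ZMod (n * r)) :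
    (ZMod r → ℕ) × ZMod (n * r) :=
  (fun i => p.1 (i - m), p.2 + (m.val : ZMod (n * r)) * (n : ZMod (n * r)))

open Finset

namespace SubregularW

variable {n r : ℕ}

theorem sum_range_natCast_eq_sum {M : Type*} [AddCommMonoid M] [NeZero r] (f : ZMod r → M) :
    ∑ i ∈ range r, f i = ∑ i : ZMod r, f i := by
  refine sum_nbij' (fun i => (i : ZMod r)) ZMod.val (by simp) (by simp [ZMod.val_lt])
    (fun i hi => ZMod.val_natCast_of_lt (mem_range.mp hi)) (fun a _ => ZMod.natCast_zmod_val a)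
    (fun _ _ => rfl)

theorem natCast_val_add_mul [NeZero r] (m m' : ZMod r) :
    ((m + m').val : ZMod (n * r)) * n =
      (m.val : ZMod (n * r)) * n + (m'.val : ZMod (n * r)) * n := by
  rw [ZMod.val_add, ← add_mul, ← Nat.cast_add]
  simp only [← Nat.cast_mul]
  rw [← Nat.mul_mod_mul_right, mul_comm r n, ZMod.natCast_mod]

theorem eq_zero_of_natCast_val_mul_eq_zero [NeZero r] (hn : n ≠ 0) {m : ZMod r}
    (h : (m.val : ZMod (n * r)) * n = 0) : m = 0 := by
  rw [← Nat.cast_mul, ZMod.natCast_eq_zero_iff, mul_comm n r,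
    Nat.mul_dvd_mul_iff_right (Nat.pos_of_ne_zero hn)] at h
  rw [← ZMod.natCast_zmod_val m, ZMod.natCast_eq_zero_iff]
  exact h

theorem subregAct_zero [NeZero r] (p : (ZMod r → ℕ) × ZMod (n * r)) :
    subregAct n r 0 p = p := by
  simp [subregAct]

theorem subregAct_add [NeZero r] (m m' : ZMod r) (p : (ZMod r → ℕ) × ZMod (n * r)) :
    subregAct n r (m + m') p = subregAct n r m (subregAct n r m' p) := by
  refine Prod.ext (funext fun i => by simp only [subregAct, sub_sub]) ?_
  simp only [subregAct, natCast_val_add_mul]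
  abel

theorem eq_zero_of_subregAct_eq_self [NeZero r] (hn : n ≠ 0) {m : ZMod r}
    {p : (ZMod r → ℕ) × ZMod (n * r)} (h : subregAct n r m p = p) : m = 0 :=
  eq_zero_of_natCast_val_mul_eq_zero hn (add_eq_left.mp (congrArg Prod.snd h))

theorem sum_mul_shift [NeZero r] (l : ZMod r → ℕ) (m : ZMod r) :
    ∑ i : ZMod r, i * (l (i - m) : ZMod r) = ∑ i : ZMod r, i * (l i : ZMod r) + m * ∑ i, l i := by
  rw [← Equiv.sum_comp (Equiv.addRight m)]
  simp [add_mul, sum_add_distrib, mul_sum]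

theorem subregCond_iff [NeZero r] {p : (ZMod r → ℕ) × ZMod (n * r)} :
    subregCond n r p ↔ ∑ i, p.1 i = n ∧
      ZMod.castHom (dvd_mul_left r n) (ZMod r) p.2 = ∑ i : ZMod r, i * (p.1 i : ZMod r) := by
  rw [subregCond, sum_range_natCast_eq_sum p.1,
    sum_range_natCast_eq_sum (fun i => i * (p.1 i : ZMod r))]

theorem subregCond_subregAct [NeZero r] (m : ZMod r) {p : (ZMod r → ℕ) × ZMod (n * r)}
    (hp : subregCond n r p) : subregCond n r (subregAct n r m p) := by
  obtain ⟨hsum, hwt⟩ := subregCond_iff.mp hp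
  refine subregCond_iff.mpr ⟨(Equiv.sum_comp (Equiv.subRight m) p.1).trans hsum, ?_⟩
  simp only [subregAct]
  rw [sum_mul_shift, map_add, hwt, map_mul, map_natCast, map_natCast, ZMod.natCast_zmod_val,
    hsum]

instance [NeZero r] : AddAction (ZMod r) {p // subregCond n r p} where
  vadd m x := ⟨subregAct n r m x.1, subregCond_subregAct m x.2⟩
  zero_vadd x := Subtype.ext (subregAct_zero x.1)
  add_vadd m m' x := Subtype.ext (subregAct_add m m' x.1)

theorem stabilizer_eq_bot [NeZero r] (hn : n ≠ 0) (x : {p // subregCond n r p}) :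
    AddAction.stabilizer (ZMod r) x = ⊥ :=
  eq_bot_iff.mpr fun _ hm => eq_zero_of_subregAct_eq_self hn (congrArg Subtype.val hm)

theorem card_fun_sum_eq (n r : ℕ) [NeZero r] :
    Nat.card {l : ZMod r → ℕ // ∑ i, l i = n} = (r + n - 1).choose n := by
  rw [← Nat.card_congr (Sym.equivNatSumOfFintype (ZMod r) n), Nat.card_eq_fintype_card,
    Sym.card_sym_eq_choose, ZMod.card]

theorem card_ker_castHom (n r : ℕ) [NeZero r] :
    Nat.card (ZMod.castHom (dvd_mul_left r n) (ZMod r)).toAddMonoidHom.ker = n := by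
  have h := (ZMod.castHom (dvd_mul_left r n) (ZMod r)).toAddMonoidHom.ker.card_mul_index
  rw [AddSubgroup.index_ker,
    AddMonoidHom.range_eq_top.mpr (ZMod.castHom_surjective (dvd_mul_left r n)), AddSubgroup.card_top, Nat.card_zmod, Nat.card_zmod] at h
  exact Nat.eq_of_mul_eq_mul_right (NeZero.pos r) h

def subregCondEquivSigma (n r : ℕ) :
    {p // subregCond n r p} ≃ Σ l : {l : ZMod r → ℕ // ∑ i ∈ range r, l i = n},
      (ZMod.castHom (dvd_mul_left r n) (ZMod r)).toAddMonoidHom ⁻¹'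
        {∑ i ∈ range r, (i : ZMod r) * (l.1 i : ZMod r)} where
  toFun x := ⟨⟨x.1.1, x.2.1⟩, ⟨x.1.2, x.2.2⟩⟩
  invFun y := ⟨(y.1.1, y.2.1), y.1.2, y.2.2⟩

theorem card_subregCond (n r : ℕ) [NeZero r] :
    Nat.card {p // subregCond n r p} = (r + n - 1).choose n * n := by
  have hsurj := ZMod.castHom_surjective (dvd_mul_left r n)
  rw [Nat.card_congr ((subregCondEquivSigma n r).trans <|
      (Equiv.sigmaCongrRight fun _ => AddMonoidHom.fiberEquivKerOfSurjective hsurj _).trans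
        (Equiv.sigmaEquivProd _ _)),
    Nat.card_prod, card_ker_castHom, ← card_fun_sum_eq n r]
  exact congrArg (· * n) (Nat.card_congr (Equiv.subtypeEquivRight fun l => by
    rw [sum_range_natCast_eq_sum l]))

def quotEquivOrbitRelQuotient (n r : ℕ) [NeZero r] :
    Quot (fun x y : {p // subregCond n r p} => ∃ m : ZMod r, subregAct n r m x.1 = y.1) ≃
      AddAction.orbitRel.Quotient (ZMod r) {p // subregCond n r p} :=
  Quot.congrRight fun x y => by
    rw [AddAction.orbitRel_apply, AddAction.mem_orbit_symm]
    exact exists_congr fun m => (Subtype.ext_iff (a1 := m +ᵥ x)).symm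

end SubregularW

/-- **Classification count for the rational subregular W-algebra `W_sb(n,r)`.**
The `ZMod r`-action on the parameter set is free and the number of orbits is
`C(n + r − 1, n − 1)`. -/
theorem stmt_11 (n r : ℕ) (hn : 2 ≤ n) (hr : 1 ≤ r) :
    (∀ (m : ZMod r) (p : (ZMod r → ℕ) × ZMod (n * r)),
      subregCond n r p → subregAct n r m p = p → m = 0) ∧
    Nat.card (Quot (fun (x y : {p // subregCond n r p}) =>
      ∃ m : ZMod r, subregAct n r m x.1 = y.1)) = (n + r - 1).choose (n - 1) := by
  have : NeZero r := ⟨by omega⟩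
  have hn0 : n ≠ 0 := by omega
  refine ⟨fun m p _ h => SubregularW.eq_zero_of_subregAct_eq_self hn0 h, ?_⟩
  have hcard := Nat.card_congr
    (AddAction.selfEquivOrbitsQuotientProd (SubregularW.stabilizer_eq_bot (r := r) hn0))
  have hchoose : (r + n - 1).choose n * n = (n + r - 1).choose (n - 1) * r := by
    have h := Nat.choose_succ_right_eq (n + r - 1) (n - 1)
    rw [Nat.sub_add_cancel (by omega), show n + r - 1 - (n - 1) = r by omega] at h
    rwa [add_comm r n]
  rw [Nat.card_prod, Nat.card_zmod, SubregularW.card_subregCond, hchoose] at hcard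
  rw [Nat.card_congr (SubregularW.quotEquivOrbitRelQuotient n r)]
  exact (Nat.eq_of_mul_eq_mul_right (NeZero.pos r) hcard).symm
end

section
/- Let n ≥ 2 and r ≥ 1 be integers. Let X be the set of pairs (λ, a) where λ : ZMod r → ℕ satisfies Σ_{i ∈ ZMod r} λ(i) = n, a ∈ ZMod ((n+r)·r), and the image of a under the natural projection ZMod((n+r)·r) → ZMod r equals the weight w(λ) := Σ_{i ∈ ZMod r} i·λ(i) computed in ZMod r. Let the group ZMod r act on X by m·(λ, a) = (σ^m λ, a + m·(n+r)), where (σ^m λ)(i) = λ(i − m) is the cyclic shift and m·(n+r) is computed in ZMod((n+r)·r) via any integer lift of m (well defined since r·(n+r) ≡ 0 in ZMod((n+r)·r)). Then this action is free, and the number of orbits equals the binomial coefficient C(n + r, n). -/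
/-!
The condition on `a` only fixes its residue mod `r`, so the parameter set is in bijection with
(compositions of `n` into `r` parts) × (kernel of `ZMod ((n+r)r) → ZMod r`), and has
`C(n+r-1, n) · (n+r)` elements. The action is free because the second coordinate is moved by
`m · (n+r)`, which vanishes in `ZMod ((n+r)r)` only for `m = 0`. Hence there are
`C(n+r-1, n) · (n+r) / r = C(n+r, n)` orbits.
-/

/-- The defining condition for the parameter set `X` of simple modules of the rational
principal W-superalgebra `W_spr(n,r)`: a pair `(λ, a)` with `λ : ZMod r → ℕ` of total sum
`n` and `a : ZMod ((n+r)·r)` whose reduction mod `r` equals the weight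
`Σ i·λ(i) ∈ ZMod r`. -/
def sprinCond (n r : ℕ) (p : (ZMod r → ℕ) × ZMod ((n + r) * r)) : Prop :=
  (∑ i ∈ Finset.range r, p.1 (i : ZMod r)) = n ∧
  ZMod.castHom (dvd_mul_left r (n + r)) (ZMod r) p.2 =
    ∑ i ∈ Finset.range r, (i : ZMod r) * (p.1 (i : ZMod r) : ZMod r)

/-- The `ZMod r`-action: `m · (λ, a) = (σ^m λ, a + m·(n+r))`, where `(σ^m λ)(i) = λ(i − m)`
and `m·(n+r)` is computed in `ZMod ((n+r)·r)` via the integer lift `m.val`. -/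
def sprinAct (n r : ℕ) (m : ZMod r) (p : (ZMod r → ℕ) × ZMod ((n + r) * r)) :
    (ZMod r → ℕ) × ZMod ((n + r) * r) :=
  (fun i => p.1 (i - m),
    p.2 + (m.val : ZMod ((n + r) * r)) * ((n + r : ℕ) : ZMod ((n + r) * r)))

open Finset

theorem Nat.choose_add_sub_one_mul_add {r : ℕ} (hr : 1 ≤ r) (n : ℕ) :
    (r + n - 1).choose n * (n + r) = (n + r).choose n * r := by
  have h := Nat.choose_mul_succ_eq (r + n - 1) n
  rwa [show r + n - 1 + 1 = n + r by omega, show n + r - n = r by omega] at h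

theorem AddMonoidHom.card_ker_mul_card_of_surjective {G H : Type*} [AddGroup G] [AddGroup H]
    (φ : G →+ H) (hφ : Function.Surjective φ) : Nat.card φ.ker * Nat.card H = Nat.card G := by
  rw [AddSubgroup.card_eq_card_quotient_mul_card_addSubgroup φ.ker,
    Nat.card_congr (QuotientAddGroup.quotientKerEquivOfSurjective φ hφ).toEquiv, mul_comm]

noncomputable def AddMonoidHom.pullbackEquivProdKer {α G H : Type*} [AddGroup G] [AddGroup H]
    (φ : G →+ H) (hφ : Function.Surjective φ) (P : α → Prop) (w : α → H) :
    {p : α × G // P p.1 ∧ φ p.2 = w p.1} ≃ {a // P a} × φ.ker where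
  toFun p := (⟨p.1.1, p.2.1⟩, ⟨p.1.2 - Function.surjInv hφ (w p.1.1), by
    rw [AddMonoidHom.mem_ker, map_sub, p.2.2, Function.surjInv_eq hφ, sub_self]⟩)
  invFun q := ⟨(q.1.1, q.2.1 + Function.surjInv hφ (w q.1.1)), q.1.2, by
    rw [map_add, AddMonoidHom.mem_ker.mp q.2.2, Function.surjInv_eq hφ, zero_add]⟩
  left_inv p := by simp
  right_inv q := by simp

theorem AddAction.card_orbitRel_mul_card_of_free {G X : Type*} [AddGroup G] [AddAction G X]
    (hfree : ∀ (m : G) (x : X), m +ᵥ x = x → m = 0) :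
    Nat.card (Quotient (AddAction.orbitRel G X)) * Nat.card G = Nat.card X := by
  have hstab : ∀ x : X, AddAction.stabilizer G x = ⊥ := fun x =>
    eq_bot_iff.mpr fun m hm => hfree m x hm
  rw [Nat.card_congr (AddAction.selfEquivOrbitsQuotientProd hstab), Nat.card_prod]

namespace ZMod

theorem sum_range_natCast {r : ℕ} [NeZero r] {M : Type*} [AddCommMonoid M] (f : ZMod r → M) :
    ∑ i ∈ range r, f (i : ZMod r) = ∑ i, f i := by
  refine sum_nbij' (fun i => (i : ZMod r)) val (fun _ _ => mem_univ _)
    (fun a _ => mem_range.mpr a.val_lt) (fun _ ha => val_cast_of_lt (mem_range.mp ha))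
    (fun a _ => natCast_zmod_val a) (fun _ _ => rfl)

theorem natCast_mul_natCast_eq_zero_iff {k r : ℕ} (hk : k ≠ 0) (a : ℕ) :
    (a : ZMod (k * r)) * (k : ZMod (k * r)) = 0 ↔ r ∣ a := by
  rw [← Nat.cast_mul, natCast_eq_zero_iff, mul_comm a, Nat.mul_dvd_mul_iff_left (by omega)]

theorem val_add_cast_mul {r : ℕ} [NeZero r] (k : ℕ) (m m' : ZMod r) :
    ((m + m').val : ZMod (k * r)) * (k : ZMod (k * r)) =
      (m.val : ZMod (k * r)) * k + (m'.val : ZMod (k * r)) * k := by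
  have h : k * (m + m').val ≡ k * (m.val + m'.val) [MOD k * r] := by
    rw [val_add]
    exact (Nat.mod_modEq _ r).mul_left' k
  have := (natCast_eq_natCast_iff _ _ _).mpr h
  push_cast at this
  linear_combination this

theorem castHom_val_cast_mul {r : ℕ} [NeZero r] (k : ℕ) (m : ZMod r) :
    castHom (dvd_mul_left r k) (ZMod r) ((m.val : ZMod (k * r)) * (k : ZMod (k * r))) =
      m * k := by
  rw [map_mul, map_natCast, map_natCast, natCast_zmod_val]

theorem card_ker_castHom {r : ℕ} [NeZero r] (k : ℕ) :
    Nat.card (castHom (dvd_mul_left r k) (ZMod r)).toAddMonoidHom.ker = k := by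
  have h := AddMonoidHom.card_ker_mul_card_of_surjective
    (castHom (dvd_mul_left r k) (ZMod r)).toAddMonoidHom (castHom_surjective (dvd_mul_left r k))
  rw [Nat.card_zmod, Nat.card_zmod] at h
  exact Nat.eq_of_mul_eq_mul_right (Nat.pos_of_neZero r) h

end ZMod

section Sprin

variable (n r : ℕ)

theorem sprinAct_zero (p : (ZMod r → ℕ) × ZMod ((n + r) * r)) : sprinAct n r 0 p = p := by
  simp [sprinAct]

variable [NeZero r]

/-- The weight `π_{P/Q}(λ) = Σ i·λ(i) ∈ ZMod r`. -/
def sprinWeight (f : ZMod r → ℕ) : ZMod r := ∑ i, i * (f i : ZMod r)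

variable {r} in
theorem sprinWeight_shift (f : ZMod r → ℕ) (m : ZMod r) :
    sprinWeight r (fun i => f (i - m)) = sprinWeight r f + m * ((∑ i, f i : ℕ) : ZMod r) := by
  rw [sprinWeight, ← _root_.Equiv.sum_comp (Equiv.addRight m), sprinWeight, Nat.cast_sum, mul_sum,
    ← sum_add_distrib]
  refine sum_congr rfl fun i _ => ?_
  simp only [Equiv.coe_addRight, add_sub_cancel_right]
  ring

theorem sprinCond_iff (p : (ZMod r → ℕ) × ZMod ((n + r) * r)) :
    sprinCond n r p ↔ ∑ i, p.1 i = n ∧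
      (ZMod.castHom (dvd_mul_left r (n + r)) (ZMod r)).toAddMonoidHom p.2 = sprinWeight r p.1 := by
  rw [sprinCond, ZMod.sum_range_natCast, ZMod.sum_range_natCast (fun i => i * (p.1 i : ZMod r))]
  rfl

theorem card_sprinCond :
    Nat.card {p // sprinCond n r p} = (r + n - 1).choose n * (n + r) := by
  rw [Nat.card_congr ((Equiv.subtypeEquivRight (sprinCond_iff n r)).trans
      (AddMonoidHom.pullbackEquivProdKer _ (ZMod.castHom_surjective (dvd_mul_left r (n + r)))
        (fun f : ZMod r → ℕ => ∑ i, f i = n) (sprinWeight r))),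
    Nat.card_prod, ZMod.card_ker_castHom, ← Nat.card_congr (Sym.equivNatSumOfFintype _ n),
    Sym.natCard_sym_eq_choose, Nat.card_zmod]

theorem sprinCond_sprinAct (m : ZMod r) {p : (ZMod r → ℕ) × ZMod ((n + r) * r)}
    (hp : sprinCond n r p) : sprinCond n r (sprinAct n r m p) := by
  rw [sprinCond_iff] at hp ⊢
  obtain ⟨hsum, hweight⟩ := hp
  have hsum' : ∑ i, p.1 (i - m) = n := (_root_.Equiv.sum_comp (Equiv.subRight m) p.1).trans hsum
  refine ⟨hsum', ?_⟩
  simp only [sprinAct, RingHom.toAddMonoidHom_eq_coe, AddMonoidHom.coe_coe, map_add] at hweight ⊢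
  rw [hweight, sprinWeight_shift, hsum, ZMod.castHom_val_cast_mul]
  push_cast
  rw [ZMod.natCast_self, add_zero]

theorem sprinAct_add (m m' : ZMod r) (p : (ZMod r → ℕ) × ZMod ((n + r) * r)) :
    sprinAct n r (m + m') p = sprinAct n r m (sprinAct n r m' p) := by
  refine Prod.ext (funext fun i => ?_) ?_
  · simp only [sprinAct, sub_sub]
  · simp only [sprinAct, ZMod.val_add_cast_mul]
    ring

theorem eq_zero_of_sprinAct_eq_self (m : ZMod r) (p : (ZMod r → ℕ) × ZMod ((n + r) * r))
    (h : sprinAct n r m p = p) : m = 0 := by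
  have hzero : (m.val : ZMod ((n + r) * r)) * ((n + r : ℕ) : ZMod ((n + r) * r)) = 0 :=
    add_eq_left.mp (congrArg Prod.snd h)
  rw [ZMod.natCast_mul_natCast_eq_zero_iff (by have := NeZero.ne r; omega)] at hzero
  exact (ZMod.val_eq_zero m).mp (Nat.eq_zero_of_dvd_of_lt hzero m.val_lt)

instance : AddAction (ZMod r) {p // sprinCond n r p} where
  vadd m p := ⟨sprinAct n r m p.1, sprinCond_sprinAct n r m p.2⟩
  zero_vadd p := Subtype.ext (sprinAct_zero n r p.1)
  add_vadd m m' p := Subtype.ext (sprinAct_add n r m m' p.1)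

theorem exists_sprinAct_eq_iff_orbitRel (x y : {p // sprinCond n r p}) :
    (∃ m : ZMod r, sprinAct n r m x.1 = y.1) ↔ AddAction.orbitRel (ZMod r) _ x y := by
  rw [Setoid.comm', AddAction.orbitRel_apply, AddAction.mem_orbit_iff]
  exact exists_congr fun m => ⟨fun h => Subtype.ext h, congrArg Subtype.val⟩

theorem card_sprinOrbits_mul :
    Nat.card (Quotient (AddAction.orbitRel (ZMod r) {p // sprinCond n r p})) * r =
      (r + n - 1).choose n * (n + r) := by
  have h := AddAction.card_orbitRel_mul_card_of_free (G := ZMod r)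
    (X := {p // sprinCond n r p}) fun m x hx =>
    eq_zero_of_sprinAct_eq_self n r m x.1 (congrArg Subtype.val hx)
  rwa [Nat.card_zmod, card_sprinCond] at h

end Sprin

theorem stmt_12_general (n r : ℕ) (hr : 1 ≤ r) :
    (∀ (m : ZMod r) (p : (ZMod r → ℕ) × ZMod ((n + r) * r)),
      sprinCond n r p → sprinAct n r m p = p → m = 0) ∧
    Nat.card (Quot (fun (x y : {p // sprinCond n r p}) =>
      ∃ m : ZMod r, sprinAct n r m x.1 = y.1)) = (n + r).choose n := by
  have : NeZero r := ⟨by omega⟩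
  refine ⟨fun m p _ => eq_zero_of_sprinAct_eq_self n r m p, ?_⟩
  rw [Nat.card_congr (Quot.congrRight (exists_sprinAct_eq_iff_orbitRel n r))]
  refine Nat.eq_of_mul_eq_mul_right (by omega : 0 < r) ?_
  exact (card_sprinOrbits_mul n r).trans (Nat.choose_add_sub_one_mul_add hr n)

/-- **Classification count for the rational principal W-superalgebra `W_spr(n,r)`.**
The `ZMod r`-action on the parameter set is free and the number of orbits is
`C(n + r, n)`. -/
theorem stmt_12 (n r : ℕ) (hn : 2 ≤ n) (hr : 1 ≤ r) :
    (∀ (m : ZMod r) (p : (ZMod r → ℕ) × ZMod ((n + r) * r)),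
      sprinCond n r p → sprinAct n r m p = p → m = 0) ∧
    Nat.card (Quot (fun (x y : {p // sprinCond n r p}) =>
      ∃ m : ZMod r, sprinAct n r m x.1 = y.1)) = (n + r).choose n :=
  stmt_12_general n r hr
end

section
/- Let n, m ≥ 2 be integers. For positive integers k, s let D(k, s) = {f : {0, 1, …, k−1} → ℕ : Σ_i f(i) = s}, with cyclic shift σ(f)(i) = f(i − 1 mod k) and weight w(f) = Σ_{i=1}^{k−1} i·f(i) ∈ ℕ. For f ∈ D(n, m), let Y(f) be the Young diagram having exactly f(i) columns of height i for each i = 1, …, n−1 (so |Y(f)| = w(f)), and define the transpose t(f) ∈ D(m, n) by t(f)(j) = (number of rows of Y(f) of length exactly j) for j = 1, …, m−1 and t(f)(0) = n − (number of rows of Y(f)); equivalently Y(t(f)) is the transposed Young diagram Y(f)ᵗ. Let X = {(g, a) ∈ D(m, n) × ZMod(n·m) : a ≡ w(g) (mod m)}, and let ZMod m act on X by r·(g, a) = (σ^r g, a + r·n) (well defined since m·n ≡ 0 in ZMod(n·m)). Then this action is free, and the map f ↦ [(t(f), w(f) mod n·m)] is a well-defined bijection from D(n, m) onto the orbit set X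 / (ZMod m). -/
/-- The weight (number of boxes) of `f : ZMod k → ℕ`, viewed as the Young diagram
having `f(i)` columns of height `i`:  `w(f) = Σ_{i=1}^{k−1} i·f(i)`. -/
def lrWeight (k : ℕ) (f : ZMod k → ℕ) : ℕ :=
  ∑ i ∈ Finset.range k, i * f (i : ZMod k)

/-- The length of the `i`-th row (`i ≥ 1`) of the Young diagram `Y(f)` associated to
`f : ZMod n → ℕ`: the number of columns of height `≥ i`, i.e. `Σ_{h ≥ i} f(h)`. -/
def lrRow (n : ℕ) (f : ZMod n → ℕ) (i : ℕ) : ℕ :=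
  ∑ h ∈ (Finset.range n).filter (fun h => i ≤ h), f (h : ZMod n)

/-- The transpose `t(f) ∈ D(m,n)` of `f ∈ D(n,m)`: for `j = 1, …, m−1`, `t(f)(j)` is the
number of rows of `Y(f)` of length exactly `j`, and `t(f)(0)` is `n` minus the number of
rows of `Y(f)` (of length between `1` and `m−1`, full-length rows being discarded under
the convention that full columns `R_m` are identified with the empty diagram), so that
`Y(t(f))` is the transposed Young diagram `Y(f)ᵗ`. -/
def lrTranspose (n m : ℕ) (f : ZMod n → ℕ) : ZMod m → ℕ := fun j =>
  if j.val = 0 then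
    n - ((Finset.Icc 1 (n - 1)).filter
      (fun i => 1 ≤ lrRow n f i ∧ lrRow n f i ≤ m - 1)).card
  else ((Finset.Icc 1 (n - 1)).filter (fun i => lrRow n f i = j.val)).card

/-- The condition cutting out `X = {(g, a) ∈ D(m,n) × ZMod(n·m) : a ≡ w(g) (mod m)}`. -/
def lrCond (n m : ℕ) (p : (ZMod m → ℕ) × ZMod (n * m)) : Prop :=
  (∑ i ∈ Finset.range m, p.1 (i : ZMod m)) = n ∧
  ZMod.castHom (dvd_mul_left m n) (ZMod m) p.2 = ((lrWeight m p.1 : ℕ) : ZMod m)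

/-- The `ZMod m`-action `r·(g, a) = (σ^r g, a + r·n)` on pairs, where
`(σ^r g)(i) = g(i − r)` and `r·n` is computed in `ZMod (n·m)` via the lift `r.val`. -/
def lrAct (n m : ℕ) (r : ZMod m) (p : (ZMod m → ℕ) × ZMod (n * m)) :
    (ZMod m → ℕ) × ZMod (n * m) :=
  (fun i => p.1 (i - r), p.2 + (r.val : ZMod (n * m)) * (n : ZMod (n * m)))

/-!
Let `K(f)` be the number of rows of length `m` in `Y(f)`. These are exactly the rows that `t`
forgets, so `Y(f)` is `Y(t(f))ᵗ` with `K(f)` rows of length `m` added on top. Hence `f` is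
determined by `(t(f), K(f))`, the pairs `(g, K)` that arise are those with `K < g(0)` (the result
must have at most `n − 1` rows), and `w(f) = w(t(f)) + m·K(f)`. On `X`, `a − w(g) = m·K` for a
unique level `K < n`, so `f ↦ (t(f), w(f))` is a bijection from `D(n, m)` onto the points of `X`
whose level is `< g(0)`.

Acting by `s ∈ [1, m]` replaces the level `K` by `K + g(m−1) + ⋯ + g(m−s)` mod `n` and `g(0)` by
`g(m−s)`. These partial sums cut `(0, n]` into consecutive intervals of lengths
`g(m−1), …, g(0)`, and the point obtained has level `< g(m−s)` exactly when the `s`-th interval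
contains `n − K`. So every orbit contains exactly one point of level `< g(0)`.
-/

open Finset

section Conjugate

variable {α : Type*}

theorem card_filter_le_and_le (s : Finset α) (v : α → ℕ) {a b : ℕ} (hab : a ≤ b + 1) :
    #{x ∈ s | a ≤ v x ∧ v x ≤ b} = #{x ∈ s | a ≤ v x} - #{x ∈ s | b + 1 ≤ v x} := by
  have hlong : {x ∈ {x ∈ s | a ≤ v x} | b + 1 ≤ v x} = {x ∈ s | b + 1 ≤ v x} := by
    rw [filter_filter]
    exact filter_congr fun x _ => by omega
  have hshort : {x ∈ {x ∈ s | a ≤ v x} | ¬b + 1 ≤ v x} = {x ∈ s | a ≤ v x ∧ v x ≤ b} := by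
    rw [filter_filter]
    exact filter_congr fun x _ => by omega
  have h := card_filter_add_card_filter_not (s := {x ∈ s | a ≤ v x}) (fun x => b + 1 ≤ v x)
  rw [hlong, hshort] at h
  omega

theorem card_filter_eq (s : Finset α) (v : α → ℕ) (i : ℕ) :
    #{x ∈ s | v x = i} = #{x ∈ s | i ≤ v x} - #{x ∈ s | i + 1 ≤ v x} := by
  rw [← card_filter_le_and_le s v (Nat.le_succ i)]
  congr 1
  exact filter_congr fun x _ => by omega

theorem sum_Icc_card_filter_eq (s : Finset α) (v : α → ℕ) (a b : ℕ) :
    ∑ j ∈ Icc a b, #{x ∈ s | v x = j} = #{x ∈ s | a ≤ v x ∧ v x ≤ b} := by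
  rw [card_eq_sum_card_fiberwise (f := v) (t := Icc a b) fun x hx => by
    simpa using (mem_filter.1 hx).2]
  refine sum_congr rfl fun j hj => ?_
  rw [filter_filter]
  congr 1
  refine filter_congr fun x _ => ?_
  simp only [mem_Icc] at hj
  omega

theorem filter_Icc_le (M y : ℕ) : {x ∈ Icc 1 M | x ≤ y} = Icc 1 (min M y) := by
  ext x
  simp only [mem_filter, mem_Icc, le_min_iff]
  omega

def conjugate (N : ℕ) (u : ℕ → ℕ) (c : ℕ) : ℕ := #{j ∈ Icc 1 N | c ≤ u j}

theorem conjugate_le (N : ℕ) (u : ℕ → ℕ) (c : ℕ) : conjugate N u c ≤ N :=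
  (card_filter_le _ _).trans (by simp)

theorem le_conjugate_iff {N : ℕ} {u : ℕ → ℕ} (hu : Antitone u) {c : ℕ} (hc : c ∈ Icc 1 N)
    (i : ℕ) : c ≤ conjugate N u i ↔ i ≤ u c := by
  rw [mem_Icc] at hc
  constructor
  · intro h
    by_contra! hlt
    have hsub : {j ∈ Icc 1 N | i ≤ u j} ⊆ Icc 1 (c - 1) := by
      intro j hj
      simp only [mem_filter, mem_Icc] at hj ⊢
      refine ⟨hj.1.1, ?_⟩
      by_contra! hjc
      have := hu (show c ≤ j by omega)
      omega
    have := card_le_card hsub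
    simp only [Nat.card_Icc] at this
    exact absurd h (by unfold conjugate; omega)
  · intro h
    calc c = #(Icc 1 c) := by simp
      _ ≤ conjugate N u i := card_le_card fun j hj => by
        simp only [mem_Icc, mem_filter] at hj ⊢
        exact ⟨⟨hj.1, hj.2.trans hc.2⟩, h.trans (hu hj.2)⟩

theorem conjugate_conjugate {N : ℕ} {u : ℕ → ℕ} (hu : Antitone u) (M : ℕ) {i : ℕ}
    (hi : 1 ≤ i) : conjugate M (conjugate N u) i = if i ≤ N then min M (u i) else 0 := by
  split_ifs with hiN
  · change #{c ∈ Icc 1 M | i ≤ conjugate N u c} = _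
    rw [filter_congr fun c _ => le_conjugate_iff hu (mem_Icc.2 ⟨hi, hiN⟩) c, filter_Icc_le]
    simp
  · refine card_eq_zero.2 (filter_false_of_mem fun c _ => ?_)
    have := conjugate_le N u c
    omega

theorem sum_conjugate (A B : ℕ) (u : ℕ → ℕ) :
    ∑ a ∈ Icc 1 A, conjugate B u a = ∑ b ∈ Icc 1 B, min A (u b) := by
  have := sum_card_bipartiteAbove_eq_sum_card_bipartiteBelow (s := Icc 1 A) (t := Icc 1 B)
    (r := fun a b => a ≤ u b)
  simp only [bipartiteAbove, bipartiteBelow, filter_Icc_le] at this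
  simpa [conjugate] using this

end Conjugate

section Rows

variable {n : ℕ} (f : ZMod n → ℕ)

theorem lrRow_eq_add_lrRow_succ {i : ℕ} (hi : i < n) :
    lrRow n f i = f i + lrRow n f (i + 1) := by
  have h : {h ∈ range n | i ≤ h} = insert i {h ∈ range n | i + 1 ≤ h} := by
    ext x
    simp only [mem_filter, mem_range, mem_insert]
    omega
  rw [lrRow, h, sum_insert (by simp)]
  rfl

theorem lrRow_eq_zero {i : ℕ} (hi : n ≤ i) : lrRow n f i = 0 :=
  sum_eq_zero fun x hx => by simp only [mem_filter, mem_range] at hx; omega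

theorem lrRow_antitone : Antitone (lrRow n f) := fun _ _ hij =>
  sum_le_sum_of_subset (monotone_filter_right _ fun _ _ h => hij.trans h)

theorem lrRow_zero : lrRow n f 0 = ∑ i ∈ range n, f i := by
  simp [lrRow]

theorem sum_eq_apply_zero_add_lrRow_one (hn : 0 < n) :
    ∑ i ∈ range n, f i = f 0 + lrRow n f 1 := by
  rw [← lrRow_zero, lrRow_eq_add_lrRow_succ f hn, Nat.cast_zero]

theorem sum_Icc_lrRow : ∑ i ∈ Icc 1 n, lrRow n f i = lrWeight n f := by
  simp only [lrRow, sum_filter]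
  rw [sum_comm]
  refine sum_congr rfl fun h hh => ?_
  rw [← sum_filter, sum_const, filter_Icc_le, smul_eq_mul]
  simp only [mem_range] at hh
  simp [min_eq_right hh.le]

theorem sum_Icc_pred_lrRow : ∑ i ∈ Icc 1 (n - 1), lrRow n f i = lrWeight n f := by
  rcases Nat.eq_zero_or_pos n with rfl | hn
  · simp [lrWeight]
  · have h : Icc 1 n = insert n (Icc 1 (n - 1)) := by
      ext x
      simp only [mem_Icc, mem_insert]
      omega
    rw [← sum_Icc_lrRow, h, sum_insert (by simp; omega), lrRow_eq_zero f le_rfl, zero_add]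

theorem eq_of_sum_eq_of_forall_Icc (hn : 0 < n) {f f' : ZMod n → ℕ}
    (hsum : ∑ i ∈ range n, f i = ∑ i ∈ range n, f' i)
    (h : ∀ i ∈ Icc 1 (n - 1), f i = f' i) : f = f' := by
  have hrow : lrRow n f 1 = lrRow n f' 1 :=
    sum_congr rfl fun i hi => h i (by simp only [mem_filter, mem_range, mem_Icc] at hi ⊢; omega)
  have h0 : f 0 = f' 0 := by
    rw [sum_eq_apply_zero_add_lrRow_one f hn, sum_eq_apply_zero_add_lrRow_one f' hn] at hsum
    omega
  have : NeZero n := ⟨hn.ne'⟩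
  funext x
  rw [← ZMod.natCast_zmod_val x]
  by_cases hx : x.val = 0
  · rw [hx, Nat.cast_zero, h0]
  · exact h _ (mem_Icc.2 ⟨Nat.one_le_iff_ne_zero.2 hx, Nat.le_sub_one_of_lt (ZMod.val_lt x)⟩)

end Rows

section Transpose

variable {n m : ℕ} {f : ZMod n → ℕ}

def lrFullRows (n m : ℕ) (f : ZMod n → ℕ) : ℕ := #{i ∈ Icc 1 (n - 1) | lrRow n f i = m}

theorem lrRow_le (hf : ∑ i ∈ range n, f i = m) (i : ℕ) : lrRow n f i ≤ m :=
  ((lrRow_antitone f (Nat.zero_le i)).trans (lrRow_zero f).le).trans hf.le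

theorem lrTranspose_natCast {j : ℕ} (hj : j ∈ Icc 1 (m - 1)) :
    lrTranspose n m f j = #{i ∈ Icc 1 (n - 1) | lrRow n f i = j} := by
  rw [mem_Icc] at hj
  simp [lrTranspose, ZMod.val_cast_of_lt (show j < m by omega), show j ≠ 0 by omega]

theorem lrTranspose_zero :
    lrTranspose n m f 0 = n - #{i ∈ Icc 1 (n - 1) | 1 ≤ lrRow n f i ∧ lrRow n f i ≤ m - 1} := by
  simp [lrTranspose]

theorem lrRow_lrTranspose {c : ℕ} (hc : 1 ≤ c) :
    lrRow m (lrTranspose n m f) c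
      = #{i ∈ Icc 1 (n - 1) | c ≤ lrRow n f i ∧ lrRow n f i ≤ m - 1} := by
  have hset : {h ∈ range m | c ≤ h} = Icc c (m - 1) := by
    ext x
    simp only [mem_filter, mem_range, mem_Icc]
    omega
  rw [lrRow, hset, ← sum_Icc_card_filter_eq]
  exact sum_congr rfl fun j hj => lrTranspose_natCast (by simp only [mem_Icc] at hj ⊢; omega)

theorem sum_lrTranspose (hm : 0 < m) : ∑ j ∈ range m, lrTranspose n m f j = n := by
  rw [sum_eq_apply_zero_add_lrRow_one _ hm, lrTranspose_zero, lrRow_lrTranspose le_rfl]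
  have : #{i ∈ Icc 1 (n - 1) | 1 ≤ lrRow n f i ∧ lrRow n f i ≤ m - 1} ≤ n - 1 :=
    (card_filter_le _ _).trans (by simp)
  omega

theorem lrFullRows_add_lrRow_lrTranspose (hf : ∑ i ∈ range n, f i = m) {c : ℕ}
    (hc : c ∈ Icc 1 m) :
    lrFullRows n m f + lrRow m (lrTranspose n m f) c = conjugate (n - 1) (lrRow n f) c := by
  rw [mem_Icc] at hc
  have hfull : lrFullRows n m f = #{i ∈ Icc 1 (n - 1) | m ≤ lrRow n f i} :=
    congrArg card (filter_congr fun i _ => by have := lrRow_le hf i; omega)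
  have hmono : #{i ∈ Icc 1 (n - 1) | m ≤ lrRow n f i} ≤ conjugate (n - 1) (lrRow n f) c :=
    card_le_card (monotone_filter_right _ fun _ _ h => hc.2.trans h)
  rw [lrRow_lrTranspose hc.1, card_filter_le_and_le _ _ (by omega), Nat.sub_add_cancel (by omega),
    hfull]
  unfold conjugate at hmono ⊢
  omega

theorem lrFullRows_lt_lrTranspose_zero (hf : ∑ i ∈ range n, f i = m) (hn : 0 < n) (hm : 0 < m) :
    lrFullRows n m f < lrTranspose n m f 0 := by
  have hconj := lrFullRows_add_lrRow_lrTranspose hf (c := 1) (mem_Icc.2 ⟨le_rfl, hm⟩)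
  have := conjugate_le (n - 1) (lrRow n f) 1
  rw [lrTranspose_zero, ← lrRow_lrTranspose le_rfl]
  omega

theorem lrWeight_lrTranspose_add (hf : ∑ i ∈ range n, f i = m) :
    lrWeight m (lrTranspose n m f) + m * lrFullRows n m f = lrWeight n f := by
  have key := sum_conjugate m (n - 1) (lrRow n f)
  rw [← sum_congr rfl fun c hc => lrFullRows_add_lrRow_lrTranspose hf hc, sum_add_distrib,
    sum_const, sum_Icc_lrRow, sum_congr rfl fun i _ => min_eq_right (lrRow_le hf i),
    sum_Icc_pred_lrRow] at key
  simp only [Nat.card_Icc, add_tsub_cancel_right, smul_eq_mul] at key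
  omega

theorem conjugate_conjugate_lrRow (hf : ∑ i ∈ range n, f i = m) {i : ℕ} (hi : 1 ≤ i) :
    conjugate m (conjugate (n - 1) (lrRow n f)) i = lrRow n f i := by
  rw [conjugate_conjugate (lrRow_antitone f) m hi]
  split_ifs with h
  · exact min_eq_right (lrRow_le hf i)
  · exact (lrRow_eq_zero f (by omega)).symm

end Transpose

section Inverse

variable {n m : ℕ} {g : ZMod m → ℕ} {k : ℕ}

/-- `lrInv n m g k` is the `f` whose diagram `Y(f)` is `Y(g)ᵗ` with `k` rows of length `m` put on
top: `k + lrRow m g c` is the height of its `c`-th column, and `f i` counts the columns of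
height `i`. -/
def lrInv (n m : ℕ) (g : ZMod m → ℕ) (k : ℕ) : ZMod n → ℕ :=
  fun i => #{c ∈ Icc 1 m | k + lrRow m g c = i.val}

theorem add_lrRow_lt (hm : 0 < m) (hg : ∑ j ∈ range m, g j = n) (hk : k < g 0) {c : ℕ}
    (hc : 1 ≤ c) : k + lrRow m g c < n := by
  have := sum_eq_apply_zero_add_lrRow_one g hm
  have := lrRow_antitone g hc
  omega

theorem lrInv_natCast {i : ℕ} (hi : i < n) :
    lrInv n m g k i = #{c ∈ Icc 1 m | k + lrRow m g c = i} := by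
  simp [lrInv, ZMod.val_cast_of_lt hi]

theorem sum_lrInv (hm : 0 < m) (hg : ∑ j ∈ range m, g j = n) (hk : k < g 0) :
    ∑ i ∈ range n, lrInv n m g k i = m := by
  rw [sum_congr rfl fun i hi => lrInv_natCast (mem_range.1 hi),
    ← card_eq_sum_card_fiberwise (f := fun c => k + lrRow m g c) fun c hc => ?_]
  · simp
  · have := add_lrRow_lt hm hg hk (mem_Icc.1 hc).1
    simp only [coe_range, Set.mem_Iio]
    omega

theorem lrRow_lrInv (hm : 0 < m) (hg : ∑ j ∈ range m, g j = n) (hk : k < g 0) {i : ℕ}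
    (hi : 1 ≤ i) : lrRow n (lrInv n m g k) i = conjugate m (fun c => k + lrRow m g c) i := by
  have hset : {h ∈ range n | i ≤ h} = Icc i (n - 1) := by
    ext x
    simp only [mem_filter, mem_range, mem_Icc]
    omega
  rw [lrRow, hset, sum_congr rfl fun h hh => lrInv_natCast (by simp only [mem_Icc] at hh; omega),
    sum_Icc_card_filter_eq]
  exact congrArg card (filter_congr fun c hc => by
    have := add_lrRow_lt hm hg hk (mem_Icc.1 hc).1
    dsimp only
    omega)

theorem conjugate_conjugate_add_lrRow (hm : 0 < m) (hg : ∑ j ∈ range m, g j = n)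
    (hk : k < g 0) {c : ℕ} (hc : c ∈ Icc 1 m) :
    conjugate (n - 1) (conjugate m (fun c => k + lrRow m g c)) c = k + lrRow m g c := by
  rw [mem_Icc] at hc
  rw [conjugate_conjugate (fun _ _ h => Nat.add_le_add_left (lrRow_antitone g h) k) _ hc.1,
    if_pos hc.2]
  exact min_eq_right (Nat.le_sub_one_of_lt (add_lrRow_lt hm hg hk hc.1))

theorem lrTranspose_lrInv (hm : 0 < m) (hg : ∑ j ∈ range m, g j = n) (hk : k < g 0) :
    lrTranspose n m (lrInv n m g k) = g := by
  have hrows : ∀ (P : ℕ → Prop) [DecidablePred P],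
      #{i ∈ Icc 1 (n - 1) | P (lrRow n (lrInv n m g k) i)}
        = #{i ∈ Icc 1 (n - 1) | P (conjugate m (fun c => k + lrRow m g c) i)} := fun P _ =>
    congrArg card (filter_congr fun i hi => by rw [lrRow_lrInv hm hg hk (mem_Icc.1 hi).1])
  have hcc := fun c => conjugate_conjugate_add_lrRow (c := c) hm hg hk
  have : NeZero m := ⟨hm.ne'⟩
  funext j
  by_cases hj : j = 0
  · rw [hj, lrTranspose_zero, hrows fun r => 1 ≤ r ∧ r ≤ m - 1,
      card_filter_le_and_le _ _ (by omega), Nat.sub_add_cancel hm]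
    change n - (conjugate (n - 1) _ 1 - conjugate (n - 1) _ m) = g 0
    rw [hcc 1 (by simp; omega), hcc m (by simp; omega), lrRow_eq_zero g le_rfl]
    have := sum_eq_apply_zero_add_lrRow_one g hm
    omega
  · have hval : j.val ∈ Icc 1 (m - 1) :=
      mem_Icc.2 ⟨Nat.one_le_iff_ne_zero.2 ((ZMod.val_ne_zero j).2 hj),
        Nat.le_sub_one_of_lt (ZMod.val_lt j)⟩
    rw [← ZMod.natCast_zmod_val j, lrTranspose_natCast hval, hrows fun r => r = j.val,
      card_filter_eq]
    rw [mem_Icc] at hval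
    change conjugate (n - 1) _ j.val - conjugate (n - 1) _ (j.val + 1) = _
    rw [hcc _ (by simp; omega), hcc _ (by simp; omega),
      lrRow_eq_add_lrRow_succ g (show j.val < m by omega)]
    omega

theorem lrWeight_lrInv (hm : 0 < m) (hg : ∑ j ∈ range m, g j = n) (hk : k < g 0) :
    lrWeight n (lrInv n m g k) = lrWeight m g + m * k := by
  rw [← sum_Icc_pred_lrRow, sum_congr rfl fun i hi => lrRow_lrInv hm hg hk (mem_Icc.1 hi).1,
    sum_conjugate, sum_congr rfl fun c hc => min_eq_right
      (Nat.le_sub_one_of_lt (add_lrRow_lt hm hg hk (mem_Icc.1 hc).1)),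
    sum_add_distrib, sum_Icc_lrRow]
  simp only [sum_const, Nat.card_Icc, add_tsub_cancel_right, smul_eq_mul]
  ring

end Inverse

theorem lrInv_lrTranspose {n m : ℕ} {f : ZMod n → ℕ} (hf : ∑ i ∈ range n, f i = m) (hn : 0 < n)
    (hm : 0 < m) : lrInv n m (lrTranspose n m f) (lrFullRows n m f) = f := by
  refine eq_of_sum_eq_of_forall_Icc hn ?_ fun i hi => ?_
  · rw [sum_lrInv hm (sum_lrTranspose hm) (lrFullRows_lt_lrTranspose_zero hf hn hm), hf]
  · rw [mem_Icc] at hi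
    rw [lrInv_natCast (by omega),
      filter_congr fun c hc => by rw [lrFullRows_add_lrRow_lrTranspose hf hc], card_filter_eq]
    change conjugate m _ i - conjugate m _ (i + 1) = _
    rw [conjugate_conjugate_lrRow hf hi.1, conjugate_conjugate_lrRow hf (by omega),
      lrRow_eq_add_lrRow_succ f (show i < n by omega)]
    omega

section Shift

variable {m : ℕ}

theorem sum_range_natCast [NeZero m] {M : Type*} [AddCommMonoid M] (F : ZMod m → M) :
    ∑ j ∈ range m, F j = ∑ x, F x := by
  rw [← sum_image fun a ha b hb h => by
    simpa [ZMod.val_cast_of_lt (mem_range.1 ha), ZMod.val_cast_of_lt (mem_range.1 hb)]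
      using congrArg ZMod.val h]
  refine sum_congr (eq_univ_of_forall fun x => mem_image.2 ?_) fun _ _ => rfl
  exact ⟨x.val, mem_range.2 (ZMod.val_lt x), ZMod.natCast_zmod_val x⟩

theorem sum_range_comp_sub [NeZero m] (g : ZMod m → ℕ) (s : ZMod m) :
    ∑ j ∈ range m, g (j - s) = ∑ j ∈ range m, g j := by
  rw [sum_range_natCast (fun x => g (x - s)), sum_range_natCast g]
  exact Equiv.sum_comp (Equiv.subRight s) g

def lrTailSum (m : ℕ) (g : ZMod m → ℕ) (s : ℕ) : ℕ := ∑ v ∈ range s, g (-(v + 1))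

theorem lrTailSum_monotone (g : ZMod m → ℕ) : Monotone (lrTailSum m g) := fun _ _ h =>
  sum_le_sum_of_subset (range_subset_range.2 h)

theorem lrTailSum_self [NeZero m] (g : ZMod m → ℕ) :
    lrTailSum m g m = ∑ j ∈ range m, g j := by
  rw [lrTailSum, sum_range_natCast (fun x => g (-(x + 1))), sum_range_natCast g]
  exact Equiv.sum_comp ((Equiv.addRight 1).trans (Equiv.neg _)) g

theorem lrWeight_shift_one [NeZero m] (h : ZMod m → ℕ) :
    lrWeight m (fun i => h (i - 1)) + m * h (-1) = lrWeight m h + ∑ j ∈ range m, h j := by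
  obtain ⟨m, rfl⟩ : ∃ m', m = m' + 1 := ⟨m - 1, (Nat.sub_add_cancel (NeZero.pos m)).symm⟩
  have hlast : ((m : ℕ) : ZMod (m + 1)) = -1 := by
    rw [eq_neg_iff_add_eq_zero]
    exact_mod_cast ZMod.natCast_self (m + 1)
  have hshift : lrWeight (m + 1) (fun i => h (i - 1)) = ∑ i ∈ range m, (i + 1) * h i := by
    rw [lrWeight, sum_range_succ']
    simp
  rw [hshift, lrWeight, ← sum_add_distrib, sum_range_succ, hlast]
  simp only [add_one_mul]

theorem lrWeight_shift [NeZero m] (g : ZMod m → ℕ) (s : ℕ) :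
    lrWeight m (fun i => g (i - (s : ZMod m))) + m * lrTailSum m g s
      = lrWeight m g + s * ∑ j ∈ range m, g j := by
  induction s with
  | zero => simp [lrTailSum]
  | succ s ih =>
    have step := lrWeight_shift_one fun i => g (i - (s : ZMod m))
    rw [sum_range_comp_sub] at step
    simp only [sub_sub, neg_sub_left, add_comm (1 : ZMod m)] at step
    rw [lrTailSum, sum_range_succ, ← lrTailSum]
    push_cast
    linarith

end Shift

section Action

variable {n m : ℕ}

theorem lrAct_natCast (s : ℕ) (p : (ZMod m → ℕ) × ZMod (n * m)) :
    lrAct n m s p = (fun i => p.1 (i - s), p.2 + s * n) := by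
  have hmn : ((m * n : ℕ) : ZMod (n * m)) = 0 := by
    rw [mul_comm]
    exact ZMod.natCast_self _
  simp only [lrAct, ZMod.val_natCast, Prod.mk.injEq, true_and]
  conv_rhs => rw [← Nat.mod_add_div s m]
  push_cast at hmn ⊢
  linear_combination -((s / m : ℕ) : ZMod (n * m)) * hmn

theorem lrAct_zero (p : (ZMod m → ℕ) × ZMod (n * m)) : lrAct n m 0 p = p := by
  simp [lrAct]

theorem lrAct_add [NeZero m] (r s : ZMod m) (p : (ZMod m → ℕ) × ZMod (n * m)) :
    lrAct n m r (lrAct n m s p) = lrAct n m (r + s) p := by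
  rw [← ZMod.natCast_zmod_val r, ← ZMod.natCast_zmod_val s, ← Nat.cast_add, lrAct_natCast,
    lrAct_natCast, lrAct_natCast]
  push_cast
  ext
  · simp only [sub_sub]
  · simp only
    ring

theorem eq_zero_of_lrAct_eq_self [NeZero m] (hn : n ≠ 0) {r : ZMod m}
    {p : (ZMod m → ℕ) × ZMod (n * m)} (h : lrAct n m r p = p) : r = 0 := by
  have hsnd : ((r.val * n : ℕ) : ZMod (n * m)) = 0 := by
    have := congrArg Prod.snd h
    push_cast
    simpa [lrAct] using this
  rw [ZMod.natCast_eq_zero_iff, mul_comm n m] at hsnd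
  exact (ZMod.val_eq_zero r).1 (Nat.eq_zero_of_dvd_of_lt
    (Nat.dvd_of_mul_dvd_mul_right (Nat.pos_of_ne_zero hn) hsnd) (ZMod.val_lt r))

variable (n m) in
def lrOrbitRel (x y : {p // lrCond n m p}) : Prop := ∃ r : ZMod m, lrAct n m r x.1 = y.1

theorem lrOrbitRel_equivalence [NeZero m] : Equivalence (lrOrbitRel n m) where
  refl x := ⟨0, lrAct_zero x.1⟩
  symm := fun ⟨r, hr⟩ => ⟨-r, by rw [← hr, lrAct_add, neg_add_cancel, lrAct_zero]⟩
  trans := fun ⟨r, hr⟩ ⟨s, hs⟩ => ⟨s + r, by rw [← hs, ← hr, lrAct_add]⟩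

theorem lrCond_lrAct [NeZero m] {p : (ZMod m → ℕ) × ZMod (n * m)} (hp : lrCond n m p)
    (r : ZMod m) : lrCond n m (lrAct n m r p) := by
  obtain ⟨hsum, hw⟩ := hp
  rw [← ZMod.natCast_zmod_val r, lrAct_natCast]
  refine ⟨by rw [sum_range_comp_sub, hsum], ?_⟩
  have hshift := congrArg (Nat.cast : ℕ → ZMod m) (lrWeight_shift p.1 r.val)
  rw [hsum] at hshift
  push_cast at hshift
  simp only [map_add, map_mul, map_natCast, hw, ZMod.natCast_self, zero_mul, add_zero] at hshift ⊢
  exact hshift.symm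

end Action

section Level

variable {n m : ℕ} {p : (ZMod m → ℕ) × ZMod (n * m)}

def lrLevel (n m : ℕ) (p : (ZMod m → ℕ) × ZMod (n * m)) : ℕ :=
  (p.2 - lrWeight m p.1).val / m

theorem lrLevel_eq (hm : 0 < m) {K : ℕ}
    (h : p.2 - lrWeight m p.1 = ((m * K : ℕ) : ZMod (n * m))) : lrLevel n m p = K % n := by
  rw [lrLevel, h, ZMod.val_natCast, mul_comm n m, Nat.mul_mod_mul_left,
    Nat.mul_div_cancel_left _ hm]

theorem lrLevel_lt [NeZero n] [NeZero m] : lrLevel n m p < n :=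
  (Nat.div_lt_iff_lt_mul (NeZero.pos m)).2 (ZMod.val_lt _)

theorem natCast_mul_lrLevel [NeZero n] [NeZero m] (hp : lrCond n m p) :
    ((m * lrLevel n m p : ℕ) : ZMod (n * m)) = p.2 - lrWeight m p.1 := by
  have hdvd : m ∣ (p.2 - lrWeight m p.1).val := by
    rw [← ZMod.natCast_eq_zero_iff, ← map_natCast (ZMod.castHom (dvd_mul_left m n) (ZMod m)),
      ZMod.natCast_zmod_val, map_sub, hp.2, map_natCast, sub_self]
  rw [lrLevel, Nat.mul_div_cancel' hdvd, ZMod.natCast_zmod_val]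

theorem lrLevel_lrAct_natCast [NeZero n] [NeZero m] (hp : lrCond n m p) (s : ℕ) :
    lrLevel n m (lrAct n m s p) = (lrLevel n m p + lrTailSum m p.1 s) % n := by
  refine lrLevel_eq (NeZero.pos m) ?_
  have hshift := congrArg (Nat.cast : ℕ → ZMod (n * m)) (lrWeight_shift p.1 s)
  have hlevel := natCast_mul_lrLevel hp
  rw [hp.1] at hshift
  rw [lrAct_natCast]
  push_cast at hshift hlevel ⊢
  linear_combination -hshift - hlevel

def lrGood (n m : ℕ) (p : (ZMod m → ℕ) × ZMod (n * m)) : Prop := lrLevel n m p < p.1 0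

theorem lrGood_lrAct_natCast_iff [NeZero n] [NeZero m] (hp : lrCond n m p) {s : ℕ}
    (hs : s ∈ Icc 1 m) :
    lrGood n m (lrAct n m s p) ↔ lrTailSum m p.1 (s - 1) < n - lrLevel n m p
      ∧ n - lrLevel n m p ≤ lrTailSum m p.1 s := by
  rw [mem_Icc] at hs
  have hK : lrLevel n m p < n := lrLevel_lt
  have hT : lrTailSum m p.1 s ≤ n :=
    (lrTailSum_monotone p.1 hs.2).trans (by rw [lrTailSum_self, hp.1])
  have hstep : lrTailSum m p.1 s = lrTailSum m p.1 (s - 1) + p.1 (-s) := by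
    obtain ⟨t, rfl⟩ : ∃ t, s = t + 1 := ⟨s - 1, by omega⟩
    simp [lrTailSum, sum_range_succ]
  rw [lrGood, lrLevel_lrAct_natCast hp, lrAct_natCast]
  dsimp only
  rw [zero_sub]
  by_cases hwrap : lrLevel n m p + lrTailSum m p.1 s < n
  · rw [Nat.mod_eq_of_lt hwrap]
    omega
  · rw [Nat.mod_eq_sub_mod (not_lt.1 hwrap), Nat.mod_eq_of_lt (by omega)]
    omega

end Level

theorem Monotone.existsUnique_mem_Icc_lt_le {S : ℕ → ℕ} (hS : Monotone S) {m y : ℕ}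
    (h0 : S 0 < y) (hy : y ≤ S m) : ∃! s, s ∈ Icc 1 m ∧ S (s - 1) < y ∧ y ≤ S s := by
  classical
  have hex : ∃ s, y ≤ S s := ⟨m, hy⟩
  have hpos : 1 ≤ Nat.find hex := Nat.one_le_iff_ne_zero.2 fun h => by
    have := Nat.find_spec hex
    rw [h] at this
    omega
  refine ⟨Nat.find hex, ⟨mem_Icc.2 ⟨hpos, Nat.find_min' hex hy⟩,
    not_le.1 (Nat.find_min hex (by omega)), Nat.find_spec hex⟩, ?_⟩
  rintro s ⟨hs, hlt, hle⟩
  rw [mem_Icc] at hs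
  refine le_antisymm ?_ (Nat.find_min' hex hle)
  by_contra! h
  have := hS (show Nat.find hex ≤ s - 1 by omega)
  have := Nat.find_spec hex
  omega

theorem existsUnique_zmod_of_existsUnique_Icc {m : ℕ} [NeZero m] {P : ZMod m → Prop}
    (h : ∃! s : ℕ, s ∈ Icc 1 m ∧ P s) : ∃! r : ZMod m, P r := by
  obtain ⟨s, ⟨-, hs⟩, huniq⟩ := h
  refine ⟨s, hs, fun r hr => ?_⟩
  obtain ⟨t, ht, rfl⟩ : ∃ t ∈ Icc 1 m, (t : ZMod m) = r := by
    by_cases hr0 : r = 0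
    · exact ⟨m, mem_Icc.2 ⟨NeZero.one_le, le_rfl⟩, by rw [ZMod.natCast_self, hr0]⟩
    · exact ⟨r.val, mem_Icc.2 ⟨Nat.one_le_iff_ne_zero.2 ((ZMod.val_ne_zero r).2 hr0),
        (ZMod.val_lt r).le⟩, ZMod.natCast_zmod_val r⟩
  rw [huniq t ⟨ht, hr⟩]

theorem existsUnique_lrGood_lrAct {n m : ℕ} [NeZero n] [NeZero m]
    {p : (ZMod m → ℕ) × ZMod (n * m)} (hp : lrCond n m p) :
    ∃! r : ZMod m, lrGood n m (lrAct n m r p) := by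
  have hK : lrLevel n m p < n := lrLevel_lt
  refine existsUnique_zmod_of_existsUnique_Icc ?_
  rw [existsUnique_congr fun s => and_congr_right (lrGood_lrAct_natCast_iff hp)]
  refine (lrTailSum_monotone p.1).existsUnique_mem_Icc_lt_le ?_ ?_
  · simp only [lrTailSum, range_zero, sum_empty]
    omega
  · rw [lrTailSum_self, hp.1]
    omega

section Point

variable {n m : ℕ} {f : ZMod n → ℕ}

def lrPoint (n m : ℕ) (f : ZMod n → ℕ) : (ZMod m → ℕ) × ZMod (n * m) :=
  (lrTranspose n m f, lrWeight n f)

theorem lrCond_lrPoint (hm : 0 < m) (hf : ∑ i ∈ range n, f i = m) :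
    lrCond n m (lrPoint n m f) := by
  refine ⟨sum_lrTranspose hm, ?_⟩
  simp [lrPoint, ← lrWeight_lrTranspose_add hf]

theorem lrLevel_lrPoint (hn : 0 < n) (hm : 0 < m) (hf : ∑ i ∈ range n, f i = m) :
    lrLevel n m (lrPoint n m f) = lrFullRows n m f := by
  have hfull : lrFullRows n m f < n := (card_filter_le _ _).trans_lt (by simp; omega)
  rw [lrLevel_eq hm (K := lrFullRows n m f), Nat.mod_eq_of_lt hfull]
  simp only [lrPoint, ← lrWeight_lrTranspose_add hf]
  push_cast
  ring

theorem lrGood_lrPoint (hn : 0 < n) (hm : 0 < m) (hf : ∑ i ∈ range n, f i = m) :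
    lrGood n m (lrPoint n m f) := by
  rw [lrGood, lrLevel_lrPoint hn hm hf]
  exact lrFullRows_lt_lrTranspose_zero hf hn hm

theorem lrInv_lrPoint (hn : 0 < n) (hm : 0 < m) (hf : ∑ i ∈ range n, f i = m) :
    lrInv n m (lrPoint n m f).1 (lrLevel n m (lrPoint n m f)) = f := by
  rw [lrLevel_lrPoint hn hm hf]
  exact lrInv_lrTranspose hf hn hm

theorem lrPoint_lrInv [NeZero n] [NeZero m] {p : (ZMod m → ℕ) × ZMod (n * m)}
    (hp : lrCond n m p) (hgood : lrGood n m p) :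
    lrPoint n m (lrInv n m p.1 (lrLevel n m p)) = p := by
  refine Prod.ext (lrTranspose_lrInv (NeZero.pos m) hp.1 hgood) ?_
  simp only [lrPoint, lrWeight_lrInv (NeZero.pos m) hp.1 hgood]
  rw [Nat.cast_add, natCast_mul_lrLevel hp, add_sub_cancel]

end Point

/-- **Level-rank duality between `L_m(sl_n)` and `L_n(sl_m)`, parameter level.**
The `ZMod m`-action on `X` is free, and `f ↦ [(t(f), w(f) mod n·m)]` is a well-defined
bijection from `D(n,m)` onto the orbit set `X / ZMod m`. -/
theorem stmt_13 (n m : ℕ) (hn : 2 ≤ n) (hm : 2 ≤ m) :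
    (∀ (r : ZMod m) (p : (ZMod m → ℕ) × ZMod (n * m)),
      lrCond n m p → lrAct n m r p = p → r = 0) ∧
    ∃ Φ : {f : ZMod n → ℕ // ∑ i ∈ Finset.range n, f (i : ZMod n) = m} →
        Quot (fun (x y : {p // lrCond n m p}) => ∃ r : ZMod m, lrAct n m r x.1 = y.1),
      Function.Bijective Φ ∧
      ∀ (f : {f : ZMod n → ℕ // ∑ i ∈ Finset.range n, f (i : ZMod n) = m})
        (x : {p // lrCond n m p}),
        Φ f = Quot.mk _ x ↔
          ∃ r : ZMod m,
            lrAct n m r (lrTranspose n m f.1, ((lrWeight n f.1 : ℕ) : ZMod (n * m))) = x.1 := by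
  have : NeZero n := ⟨by omega⟩
  have : NeZero m := ⟨by omega⟩
  have hn0 : 0 < n := by omega
  have hm0 : 0 < m := by omega
  let Φ (f : {f : ZMod n → ℕ // ∑ i ∈ range n, f i = m}) :=
    Quot.mk (lrOrbitRel n m) ⟨lrPoint n m f.1, lrCond_lrPoint hm0 f.2⟩
  have hΦ (f : {f : ZMod n → ℕ // ∑ i ∈ range n, f i = m}) (x : {p // lrCond n m p}) :
      Φ f = Quot.mk _ x ↔ ∃ r : ZMod m, lrAct n m r (lrPoint n m f.1) = x.1 :=
    Quot.eq.trans lrOrbitRel_equivalence.eqvGen_iff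
  refine ⟨fun r p _ h => eq_zero_of_lrAct_eq_self (by omega) h, Φ, ⟨?_, ?_⟩, hΦ⟩
  · rintro ⟨f, hf⟩ ⟨f', hf'⟩ h
    obtain ⟨r, hr⟩ := (hΦ _ _).1 h
    obtain rfl : r = 0 := (existsUnique_lrGood_lrAct (lrCond_lrPoint hm0 hf)).unique
      (hr ▸ lrGood_lrPoint hn0 hm0 hf')
      (by rw [lrAct_zero]; exact lrGood_lrPoint hn0 hm0 hf)
    change lrAct n m 0 (lrPoint n m f) = lrPoint n m f' at hr
    rw [lrAct_zero] at hr
    refine Subtype.ext (show f = f' from ?_)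
    rw [← lrInv_lrPoint hn0 hm0 hf, hr, lrInv_lrPoint hn0 hm0 hf']
  · rintro ⟨⟨p, hp⟩⟩
    obtain ⟨r, hgood, -⟩ := existsUnique_lrGood_lrAct hp
    have hq := lrCond_lrAct hp r
    refine ⟨⟨_, sum_lrInv hm0 hq.1 hgood⟩, (hΦ _ _).2 ⟨-r, ?_⟩⟩
    rw [lrPoint_lrInv hq hgood, lrAct_add, neg_add_cancel, lrAct_zero]
end

section
/- Let R = R₀ ⊕ R₁ be a ℤ/2-graded unital ℂ-algebra (so R_i·R_j ⊆ R_{i+j} for i, j ∈ ℤ/2) such that R₀ = ℂ·1 and every nonzero homogeneous element of R is invertible. Then dim_ℂ R₁ ≤ 1. Moreover, if f ∈ R₁ satisfies f² = 1, then every g ∈ R₁ with g² = 1 equals f or −f. -/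
/-!
Multiplication by an odd unit `u` sends the odd part into the even part `ℂ·1`, so every odd `g`
equals `u⁻¹ (u g) ∈ ℂ·u⁻¹`, and the odd part has dimension at most one. For an odd involution
`f` we may take `u = f = u⁻¹`; then `g = c f`, and `g² = 1` forces `c² = 1`.
-/

open Submodule

theorem Units.le_span_inv_of_forall_mul_eq_algebraMap {K R : Type*} [CommSemiring K]
    [Semiring R] [Algebra K R] {M : Submodule K R} (u : Rˣ)
    (h : ∀ g ∈ M, ∃ c : K, ↑u * g = algebraMap K R c) : M ≤ K ∙ (↑u⁻¹ : R) := by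
  intro g hg
  obtain ⟨c, hc⟩ := h g hg
  refine mem_span_singleton.mpr ⟨c, ?_⟩
  rw [Algebra.smul_def, Algebra.commutes, ← hc, u.inv_mul_cancel_left]

theorem SetLike.mul_mem_zero_of_mem_one {R S : Type*} [SetLike S R] [Mul R]
    (A : ZMod 2 → S) [SetLike.GradedMul A] {x y : R} (hx : x ∈ A 1) (hy : y ∈ A 1) :
    x * y ∈ A 0 :=
  SetLike.mul_mem_graded hx hy

section OddPart

variable {K R : Type*} [Field K] [Ring R] [Algebra K R]
  {𝒜 : ZMod 2 → Submodule K R} [SetLike.GradedMul 𝒜]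
  (h0 : ∀ x ∈ 𝒜 0, ∃ c : K, x = algebraMap K R c)
include h0

theorem odd_le_span_inv_of_isUnit (u : Rˣ) (hu : ↑u ∈ 𝒜 1) : 𝒜 1 ≤ K ∙ (↑u⁻¹ : R) :=
  u.le_span_inv_of_forall_mul_eq_algebraMap fun _ hg ↦
    h0 _ (SetLike.mul_mem_zero_of_mem_one 𝒜 hu hg)

theorem rank_odd_le_one (hinv : ∀ x ∈ 𝒜 1, x ≠ 0 → IsUnit x) : Module.rank K (𝒜 1) ≤ 1 := by
  rw [rank_submodule_le_one_iff']
  by_cases h : ∃ f ∈ 𝒜 1, f ≠ 0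
  · obtain ⟨f, hf, hf0⟩ := h
    obtain ⟨u, rfl⟩ := hinv f hf hf0
    exact ⟨_, odd_le_span_inv_of_isUnit h0 u hf⟩
  · push Not at h
    exact ⟨0, fun g hg ↦ by simp [h g hg]⟩

theorem eq_or_eq_neg_of_mul_self_eq_one {f g : R} (hf : f ∈ 𝒜 1) (hf2 : f * f = 1)
    (hg : g ∈ 𝒜 1) (hg2 : g * g = 1) : g = f ∨ g = -f := by
  obtain h | h := subsingleton_or_nontrivial R
  · exact Or.inl (Subsingleton.elim g f)
  have hg_span : g ∈ K ∙ f := odd_le_span_inv_of_isUnit h0 ⟨f, f, hf2, hf2⟩ hf hg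
  obtain ⟨c, rfl⟩ := mem_span_singleton.mp hg_span
  have hc : c * c = 1 := by
    apply (algebraMap K R).injective
    rw [map_one, ← hg2, smul_mul_smul_comm, hf2, Algebra.algebraMap_eq_smul_one]
  rcases mul_self_eq_one_iff.mp hc with rfl | rfl
  · exact Or.inl (one_smul K f)
  · exact Or.inr (by rw [neg_smul, one_smul])

end OddPart

/-- **Super Schur/Dixmier lemma, algebraic core.**
Let `R = R₀ ⊕ R₁` be a `ℤ/2`-graded unital `ℂ`-algebra such that `R₀ = ℂ·1` and every
nonzero homogeneous element of `R` is invertible.  Then `dim_ℂ R₁ ≤ 1`, and if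
`f ∈ R₁` satisfies `f² = 1` then every `g ∈ R₁` with `g² = 1` equals `f` or `−f`. -/
theorem stmt_14 (R : Type*) [Ring R] [Algebra ℂ R]
    (𝒜 : ZMod 2 → Submodule ℂ R) [GradedAlgebra 𝒜]
    (h0 : ∀ x ∈ 𝒜 0, ∃ c : ℂ, x = algebraMap ℂ R c)
    (hinv : ∀ (i : ZMod 2) (x : R), x ∈ 𝒜 i → x ≠ 0 → IsUnit x) :
    Module.rank ℂ (𝒜 1) ≤ 1 ∧
    ∀ f ∈ 𝒜 1, f * f = 1 → ∀ g ∈ 𝒜 1, g * g = 1 → g = f ∨ g = -f :=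
  ⟨rank_odd_le_one h0 (hinv 1), fun _ hf hf2 _ hg hg2 ↦
    eq_or_eq_neg_of_mul_self_eq_one h0 hf hf2 hg hg2⟩
end

section
/- Let n ≥ 1 and let E ∈ M_n(ℂ) be the cyclic shift matrix with entries E_{ij} = 1 if i ≡ j + 1 (mod n) and E_{ij} = 0 otherwise. Let a_0, …, a_{n−1} ∈ ℂ with Σ_{i=0}^{n−1} a_i = 0, and let A ∈ M_n(ℂ) have entries A_{ij} = a_j if i ≡ j + 1 (mod n) and 0 otherwise. Then there exists X ∈ M_n(ℂ) with E·X − X·E = A; consequently the block matrix [[E, A], [0, E]] ∈ M_{2n}(ℂ) is similar (conjugate by an invertible matrix) to the block-diagonal matrix [[E, 0], [0, E]]. -/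
open Matrix

/-- The `n × n` cyclic shift matrix: `E i j = 1` iff `i ≡ j + 1 (mod n)`. -/
def cyclicShift (n : ℕ) : Matrix (Fin n) (Fin n) ℂ :=
  fun i j => if ((i : ZMod n) = (j : ZMod n) + 1) then 1 else 0

/-- The weighted shift matrix: `A i j = a j` iff `i ≡ j + 1 (mod n)`. -/
def weightedShift (n : ℕ) (a : Fin n → ℂ) : Matrix (Fin n) (Fin n) ℂ :=
  fun i j => if ((i : ZMod n) = (j : ZMod n) + 1) then a j else 0

/-!
For a diagonal `X = diag(d)`, the commutator `E X - X E` is the weighted shift with weights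
`d j - d (j + 1)`, indices mod `n`. A cyclic sequence `a` is of this form exactly when its sum
vanishes: take `d j = -(a 0 + ⋯ + a (j - 1))`. Conjugating `[[E, E X - X E], [0, E]]` by the
unipotent matrix `[[1, -X], [0, 1]]` then clears the off-diagonal block.
-/

theorem Fin.natCast_eq_natCast_add_one_iff {n : ℕ} (i j : Fin n) :
    ((i : ℕ) : ZMod n) = ((j : ℕ) : ZMod n) + 1 ↔ i = finRotate n j := by
  have := j.neZero
  rw [finRotate_apply, ← Nat.cast_add_one, ZMod.natCast_eq_natCast_iff', Fin.ext_iff,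
    Fin.val_add, Fin.val_one', Nat.add_mod_mod, Nat.mod_eq_of_lt i.isLt]

theorem exists_sub_finRotate_eq_of_sum_eq_zero {M : Type*} [AddCommGroup M] {n : ℕ}
    (a : Fin n → M) (ha : ∑ i, a i = 0) :
    ∃ d : Fin n → M, ∀ j, d j - d (finRotate n j) = a j := by
  let a' : ℕ → M := fun k => if h : k < n then a ⟨k, h⟩ else 0
  have hsum : ∑ k ∈ Finset.range n, a' k = 0 := by
    rw [← ha, ← Fin.sum_univ_eq_sum_range]
    simp [a']
  refine ⟨fun j => -∑ k ∈ Finset.range j, a' k, fun j => ?_⟩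
  obtain ⟨k, rfl⟩ : ∃ k, n = k + 1 := Nat.exists_eq_succ_of_ne_zero j.pos.ne'
  have haj : a' j = a j := dif_pos j.isLt
  dsimp only
  rw [coe_finRotate]
  split_ifs with hj
  · subst hj
    rw [Finset.sum_range_succ] at hsum
    rw [Fin.val_last, Finset.range_zero, Finset.sum_empty, ← haj, Fin.val_last, neg_zero,
      sub_zero, neg_eq_iff_add_eq_zero]
    exact hsum
  · rw [Finset.sum_range_succ, haj]
    abel

theorem cyclicShift_mul_diagonal_sub_diagonal_mul (n : ℕ) (d : Fin n → ℂ) :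
    cyclicShift n * diagonal d - diagonal d * cyclicShift n =
      weightedShift n fun j => d j - d (finRotate n j) := by
  ext i j
  simp only [Matrix.sub_apply, mul_diagonal, diagonal_mul, cyclicShift, weightedShift,
    Fin.natCast_eq_natCast_add_one_iff]
  split_ifs with h
  · rw [h]
    ring
  · ring

theorem Matrix.exists_isUnit_fromBlocks_mul_sub_mul_conj {R m p : Type*} [CommRing R]
    [Fintype m] [Fintype p] [DecidableEq m] [DecidableEq p]
    (E : Matrix m m R) (F : Matrix p p R) (X : Matrix m p R) :
    ∃ P, IsUnit P ∧ fromBlocks E (E * X - X * F) 0 F * P = P * fromBlocks E 0 0 F := by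
  refine ⟨fromBlocks 1 (-X) 0 1, ?_, ?_⟩
  · rw [isUnit_iff_isUnit_det, det_fromBlocks_zero₂₁]
    simp
  · simp only [fromBlocks_multiply]
    congr 1 <;> simp
    noncomm_ring

theorem stmt_15_general (n : ℕ) (a : Fin n → ℂ) (ha : ∑ i, a i = 0) :
    (∃ X : Matrix (Fin n) (Fin n) ℂ,
      cyclicShift n * X - X * cyclicShift n = weightedShift n a) ∧
    (∃ P : Matrix (Fin n ⊕ Fin n) (Fin n ⊕ Fin n) ℂ, IsUnit P ∧
      Matrix.fromBlocks (cyclicShift n) (weightedShift n a) 0 (cyclicShift n) * P =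
        P * Matrix.fromBlocks (cyclicShift n) 0 0 (cyclicShift n)) := by
  obtain ⟨d, hd⟩ := exists_sub_finRotate_eq_of_sum_eq_zero a ha
  have hX : cyclicShift n * diagonal d - diagonal d * cyclicShift n = weightedShift n a := by
    rw [cyclicShift_mul_diagonal_sub_diagonal_mul]
    exact congrArg _ (funext hd)
  refine ⟨⟨_, hX⟩, ?_⟩
  rw [← hX]
  exact exists_isUnit_fromBlocks_mul_sub_mul_conj _ _ _

/-- **Splitting of self-extensions of induced modules, linear-algebra form.**
Let `E` be the `n × n` cyclic shift matrix and `A` the weighted shift with weights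
`a₀, …, a_{n−1}` summing to `0`.  Then `A` is a commutator `E·X − X·E`, and consequently
the block matrix `[[E, A], [0, E]]` is similar to `[[E, 0], [0, E]]`. -/
theorem stmt_15 (n : ℕ) (hn : 1 ≤ n) (a : Fin n → ℂ) (ha : ∑ i, a i = 0) :
    (∃ X : Matrix (Fin n) (Fin n) ℂ,
      cyclicShift n * X - X * cyclicShift n = weightedShift n a) ∧
    (∃ P : Matrix (Fin n ⊕ Fin n) (Fin n ⊕ Fin n) ℂ, IsUnit P ∧
      Matrix.fromBlocks (cyclicShift n) (weightedShift n a) 0 (cyclicShift n) * P =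
        P * Matrix.fromBlocks (cyclicShift n) 0 0 (cyclicShift n)) :=
  stmt_15_general n a ha
end
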